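/- arXiv:1508.04832 — 5 statements merged into one kernel-verified Lean document; each statement's English description precedes it below -/
import Mathlib

section
/- Let D_0, D_1, ..., D_N be finite sequences of nonnegative integers such that D_0 = (x_{00}, x_{01}) has length 2 with x_{00}, x_{01} ≤ n, and for each i ≥ 0 the sequence D_{i+1} is obtained from D_i by inserting between two consecutive terms a nonnegative integer strictly smaller than each of those two terms. Then the length of D_N is at most 2^n + 1 (i.e., its last index j_N satisfies j_N ≤ 2^n). -/
/-- `D'` is obtained from `D` by inserting between two consecutive terms `a, b`
a nonnegative integer `x` strictly smaller than each of them. -/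
def InsertStep (D D' : List ℕ) : Prop :=
  ∃ (l1 l2 : List ℕ) (a x b : ℕ), x < a ∧ x < b ∧
    D = l1 ++ a :: b :: l2 ∧ D' = l1 ++ a :: x :: b :: l2

/-- Weight of a sequence: sum over adjacent pairs of `2 ^ min a b`. -/
def wt : List ℕ → ℕ
  | a :: b :: l => 2 ^ (min a b) + wt (b :: l)
  | _ => 0

lemma wt_mono_append (l1 : List ℕ) (a : ℕ) (m m' : List ℕ)
    (h : wt (a :: m') ≤ wt (a :: m)) :
    wt (l1 ++ a :: m') ≤ wt (l1 ++ a :: m) := by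
  induction l1 with
  | nil => simpa using h
  | cons c l1 ih =>
    cases l1 with
    | nil =>
      simp only [List.nil_append, List.cons_append, wt]
      exact Nat.add_le_add_left h _
    | cons d l1 =>
      simp only [List.cons_append, wt]
      exact Nat.add_le_add_left (by simpa using ih) _

lemma wt_insert (a x b : ℕ) (l2 : List ℕ) (hxa : x < a) (hxb : x < b) :
    wt (a :: x :: b :: l2) ≤ wt (a :: b :: l2) := by
  have h1 : min a x = x := min_eq_right hxa.le
  have h2 : min x b = x := min_eq_left hxb.le
  have hx : x + 1 ≤ min a b := by omega
  have : 2 ^ x + 2 ^ x ≤ 2 ^ (min a b) := by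
    calc 2 ^ x + 2 ^ x = 2 ^ (x + 1) := by ring
    _ ≤ 2 ^ (min a b) := Nat.pow_le_pow_right (by norm_num) hx
  simp only [wt, h1, h2]
  omega

lemma length_le_wt (a : ℕ) (l : List ℕ) :
    (a :: l).length ≤ wt (a :: l) + 1 := by
  induction l generalizing a with
  | nil => simp [wt]
  | cons b l ih =>
    have h1 : 1 ≤ 2 ^ (min a b) := Nat.one_le_two_pow
    have := ih b
    simp only [wt, List.length_cons] at *
    omega

/-- Lemma (sequence bound): starting from a length-2 sequence of nonnegative
integers bounded by `n` and repeatedly inserting entries strictly smaller than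
their two neighbors, the resulting sequence has length at most `2^n + 1`. -/
theorem sequence_bound (n N : ℕ) (D : ℕ → List ℕ)
    (h0 : ∃ x y : ℕ, x ≤ n ∧ y ≤ n ∧ D 0 = [x, y])
    (hstep : ∀ i < N, InsertStep (D i) (D (i + 1))) :
    (D N).length ≤ 2 ^ n + 1 := by
  have key : wt (D N) ≤ 2 ^ n ∧ D N ≠ [] := by
    induction N with
    | zero =>
      obtain ⟨x, y, hx, hy, hD⟩ := h0
      rw [hD]
      constructor
      · simp only [wt]
        have : min x y ≤ n := le_trans (min_le_left _ _) hx
        have := Nat.pow_le_pow_right (by norm_num : 1 ≤ 2) this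
        omega
      · simp
    | succ N ih =>
      have ihh := ih (fun i hi => hstep i (by omega))
      obtain ⟨l1, l2, a, x, b, hxa, hxb, hD, hD'⟩ := hstep N (by omega)
      rw [hD']
      refine ⟨?_, by simp⟩
      calc wt (l1 ++ a :: x :: b :: l2) ≤ wt (l1 ++ a :: b :: l2) :=
            wt_mono_append l1 a _ _ (wt_insert a x b l2 hxa hxb)
        _ = wt (D N) := by rw [hD]
        _ ≤ 2 ^ n := ihh.1
  obtain ⟨hw, hne⟩ := key
  obtain ⟨a, l, hl⟩ := List.exists_cons_of_ne_nil hne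
  rw [hl] at hw ⊢
  exact le_trans (length_le_wt a l) (by omega)
end

section
/- Let (Z, ρ) be a metric space and suppose there is a constant c > 10 and an integer m ≥ 0 such that for all sufficiently small s > 0 there is a cover K of Z which is a disjoint union of subcollections K_1, ..., K_{m+1}, where every set in K has diameter ≤ s, and whenever A, B ∈ K_i are distinct sets in the same subcollection with points a ∈ A, b ∈ B satisfying ρ(a,b) < s/c^{3i-1}, there exist k < i, a set E ∈ K_k, and a point e ∈ E with ρ(a,e) < s/c^{3i-2} and ρ(b,e) < s/c^{3i-2}. Then for all such s, Z admits a cover by sets of diameter at most s + 2s/c^3 such that every point of Z is within distance s/c^{3m+4} of at most m+1 elements of the cover. -/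
open Set

namespace HandleCoverAux

variable {Z : Type*} [MetricSpace Z]

/-- Open neighborhood of `K` of radius `s / c^(3i+3)`. -/
def N (c s : ℝ) (i : ℕ) (K : Set Z) : Set Z :=
  {z | ∃ x ∈ K, dist z x < s / c ^ (3 * i + 3)}

/-- Union of all handles of levels `< i`. -/
def U (c s : ℝ) (𝒦' : ℕ → Set (Set Z)) : ℕ → Set Z
  | 0 => ∅
  | (i + 1) => U c s 𝒦' i ∪ ⋃ K ∈ 𝒦' i, (N c s i K \ U c s 𝒦' i)

/-- The handle of `K` at level `i`. -/
def H (c s : ℝ) (𝒦' : ℕ → Set (Set Z)) (i : ℕ) (K : Set Z) : Set Z :=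
  N c s i K \ U c s 𝒦' i

lemma U_mono (c s : ℝ) (𝒦' : ℕ → Set (Set Z)) : ∀ {i j : ℕ}, i ≤ j →
    U c s 𝒦' i ⊆ U c s 𝒦' j := by
  intro i j h
  induction j with
  | zero => simp_all
  | succ j ih =>
    rcases Nat.lt_or_ge i (j+1) with h' | h'
    · exact (ih (Nat.lt_succ_iff.mp h')).trans (by rw [U]; exact subset_union_left)
    · have : i = j + 1 := le_antisymm h h'
      subst this; rfl

lemma N_subset_U (c s : ℝ) (𝒦' : ℕ → Set (Set Z)) {i : ℕ} {K : Set Z}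
    (hK : K ∈ 𝒦' i) : N c s i K ⊆ U c s 𝒦' (i + 1) := by
  intro z hz
  rw [U]
  by_cases hzU : z ∈ U c s 𝒦' i
  · exact Or.inl hzU
  · exact Or.inr (mem_iUnion₂.mpr ⟨K, hK, hz, hzU⟩)

lemma U_subset_handles (c s : ℝ) (𝒦' : ℕ → Set (Set Z)) : ∀ (j : ℕ), ∀ z ∈ U c s 𝒦' j,
    ∃ i < j, ∃ K ∈ 𝒦' i, z ∈ H c s 𝒦' i K := by
  intro j
  induction j with
  | zero => intro z hz; simp [U] at hz
  | succ j ih =>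
    intro z hz
    rw [U] at hz
    rcases hz with hz | hz
    · obtain ⟨i, hi, K, hK, hzK⟩ := ih z hz
      exact ⟨i, hi.trans (Nat.lt_succ_self j), K, hK, hzK⟩
    · obtain ⟨K, hK, hzK⟩ := mem_iUnion₂.mp hz
      exact ⟨j, Nat.lt_succ_self j, K, hK, hzK⟩

lemma div_pow_anti {c : ℝ} (hc : 1 < c) {s : ℝ} (hs : 0 < s) {n k : ℕ} (h : n ≤ k) :
    s / c ^ k ≤ s / c ^ n :=
  div_le_div_of_nonneg_left hs.le (pow_pos (lt_trans one_pos hc) n)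
    (pow_le_pow_right₀ hc.le h)

lemma mul_div_pow_succ {c : ℝ} (hc : 0 < c) (s : ℝ) (n : ℕ) :
    c * (s / c ^ (n + 1)) = s / c ^ n := by
  rw [pow_succ]
  field_simp

end HandleCoverAux

open HandleCoverAux

/-- Proposition (handle decomposition gives bounded multiplicity cover):
given a cover `𝒦` of a metric space `Z` split into subcollections
`𝒦 0, …, 𝒦 m` (representing `𝒦_1, …, 𝒦_{m+1}`), with all elements of
diameter at most `s`, such that close points in distinct sets of the same
subcollection are both close to a point in a lower-index set, the space `Z`
admits a cover by sets of diameter at most `s + 2s/c³` such that every point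
is within distance `s/c^{3m+4}` of at most `m+1` elements of the cover. -/
theorem handle_cover {Z : Type*} [MetricSpace Z] (c : ℝ) (hc : 10 < c) (m : ℕ)
    (s : ℝ) (hs : 0 < s)
    (𝒦 : Fin (m + 1) → Set (Set Z))
    (hcover : (⋃ i, ⋃₀ 𝒦 i) = Set.univ)
    (hdisj : ∀ i j : Fin (m + 1), i ≠ j → Disjoint (𝒦 i) (𝒦 j))
    (hdiam : ∀ i : Fin (m + 1), ∀ K ∈ 𝒦 i, EMetric.diam K ≤ ENNReal.ofReal s)
    (hsep : ∀ i : Fin (m + 1), ∀ A ∈ 𝒦 i, ∀ B ∈ 𝒦 i, A ≠ B →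
      ∀ a ∈ A, ∀ b ∈ B, dist a b < s / c ^ (3 * ((i : ℕ) + 1) - 1) →
        ∃ k : Fin (m + 1), (k : ℕ) < (i : ℕ) ∧ ∃ E ∈ 𝒦 k, ∃ e ∈ E,
          dist a e < s / c ^ (3 * ((i : ℕ) + 1) - 2) ∧
          dist b e < s / c ^ (3 * ((i : ℕ) + 1) - 2)) :
    ∃ ℒ : Set (Set Z), ⋃₀ ℒ = Set.univ ∧
      (∀ L ∈ ℒ, EMetric.diam L ≤ ENNReal.ofReal (s + 2 * s / c ^ 3)) ∧
      (∀ z : Z, {L ∈ ℒ | ∃ x ∈ L, dist z x < s / c ^ (3 * m + 4)}.encard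
        ≤ (m + 1 : ℕ∞)) := by
  have hc1 : (1 : ℝ) < c := by linarith
  have hc0 : (0 : ℝ) < c := by linarith
  have hpow : ∀ n : ℕ, (0 : ℝ) < c ^ n := fun n => pow_pos hc0 n
  have hdivpos : ∀ n : ℕ, (0 : ℝ) < s / c ^ n := fun n => div_pos hs (hpow n)
  -- extend 𝒦 to ℕ
  set 𝒦' : ℕ → Set (Set Z) := fun k => if h : k < m + 1 then 𝒦 ⟨k, h⟩ else ∅ with h𝒦'
  have h𝒦'eq : ∀ (i : Fin (m + 1)), 𝒦' (i : ℕ) = 𝒦 i := by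
    intro i
    simp only [h𝒦', i.isLt, dif_pos]
  set ℒ : Set (Set Z) :=
    {L | ∃ i < m + 1, ∃ K ∈ 𝒦' i, L = H c s 𝒦' i K} with hℒ
  -- the key lemma: two handles at the same level near a common point come from the same set
  have key : ∀ (z : Z) (i : ℕ) (hi : i < m + 1) (A B : Set Z),
      A ∈ 𝒦' i → B ∈ 𝒦' i →
      ∀ a' ∈ H c s 𝒦' i A, ∀ b' ∈ H c s 𝒦' i B,
      dist z a' < s / c ^ (3 * m + 4) → dist z b' < s / c ^ (3 * m + 4) → A = B := by
    intro z i hi A B hA hB a' ha' b' hb' hza hzb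
    by_contra hAB
    obtain ⟨⟨a, haA, haa'⟩, ha'U⟩ := ha'
    obtain ⟨⟨b, hbB, hbb'⟩, hb'U⟩ := hb'
    -- dist a b < s / c^(3i+2)
    have h1 : s / c ^ (3 * m + 4) ≤ s / c ^ (3 * i + 3) :=
      div_pow_anti hc1 hs (by omega)
    have h2 : s / c ^ (3 * i + 2) = c * (s / c ^ (3 * i + 3)) :=
      (mul_div_pow_succ hc0 s (3 * i + 2)).symm
    have hab : dist a b < s / c ^ (3 * i + 2) := by
      have t1 : dist a b ≤ dist a a' + dist a' b' + dist b' b := dist_triangle4 a a' b' b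
      have t2 : dist a' b' ≤ dist a' z + dist z b' := dist_triangle a' z b'
      have e1 : dist a a' = dist a' a := dist_comm a a'
      have e2 : dist a' z = dist z a' := dist_comm a' z
      have e3 : dist b' b = dist b b' := dist_comm b' b
      have hx : (0:ℝ) < s / c ^ (3 * i + 3) := hdivpos _
      nlinarith [hza, hzb, haa', hbb']
    set iF : Fin (m + 1) := ⟨i, hi⟩ with hiF
    rw [h𝒦'eq iF] at hA hB
    have hexp1 : 3 * ((iF : ℕ) + 1) - 1 = 3 * i + 2 := by simp [hiF]; omega
    have hexp2 : 3 * ((iF : ℕ) + 1) - 2 = 3 * i + 1 := by simp [hiF]; omega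
    obtain ⟨k, hk, E, hE, e, heE, hae, hbe⟩ :=
      hsep iF A hA B hB hAB a haA b hbB (by rw [hexp1]; exact hab)
    rw [hexp2] at hae
    have hkI : (k : ℕ) < i := by simpa [hiF] using hk
    -- a' lies in the neighborhood of E at level k
    have ha'E : a' ∈ N c s (k : ℕ) E := by
      refine ⟨e, heE, ?_⟩
      have t : dist a' e ≤ dist a' a + dist a e := dist_triangle a' a e
      have h3 : s / c ^ (3 * i + 3) ≤ s / c ^ (3 * i + 1) := div_pow_anti hc1 hs (by omega)
      have h4 : s / c ^ (3 * i) = c * (s / c ^ (3 * i + 1)) :=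
        (mul_div_pow_succ hc0 s (3 * i)).symm
      have h5 : s / c ^ (3 * i) ≤ s / c ^ (3 * (k : ℕ) + 3) := div_pow_anti hc1 hs (by omega)
      have hx : (0:ℝ) < s / c ^ (3 * i + 1) := hdivpos _
      nlinarith [hae, haa', t, h3, h4, h5]
    have : a' ∈ U c s 𝒦' i := by
      refine U_mono c s 𝒦' (show (k : ℕ) + 1 ≤ i by omega) ?_
      exact N_subset_U c s 𝒦' (by rw [h𝒦'eq k]; exact hE) ha'E
    exact ha'U this
  refine ⟨ℒ, ?_, ?_, ?_⟩
  · -- covering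
    apply eq_univ_of_univ_subset
    intro z _
    have hz : z ∈ ⋃ i, ⋃₀ 𝒦 i := by rw [hcover]; trivial
    obtain ⟨i, K, hK, hzK⟩ := by
      simpa only [mem_iUnion, mem_sUnion] using hz
    have hzN : z ∈ N c s (i : ℕ) K := ⟨z, hzK, by simpa [dist_self] using hdivpos (3 * (i:ℕ) + 3)⟩
    have hzU : z ∈ U c s 𝒦' (m + 1) :=
      U_mono c s 𝒦' (by omega : (i : ℕ) + 1 ≤ m + 1)
        (N_subset_U c s 𝒦' (by rw [h𝒦'eq i]; exact hK) hzN)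
    obtain ⟨j, hj, K', hK', hzK'⟩ := U_subset_handles c s 𝒦' (m + 1) z hzU
    exact ⟨H c s 𝒦' j K', ⟨j, hj, K', hK', rfl⟩, hzK'⟩
  · -- diameter bound
    rintro L ⟨i, hi, K, hK, rfl⟩
    apply EMetric.diam_le
    intro x hx y hy
    obtain ⟨⟨kx, hkx, hxk⟩, -⟩ := hx
    obtain ⟨⟨ky, hky, hyk⟩, -⟩ := hy
    have hkk : dist kx ky ≤ s := by
      have h := hdiam ⟨i, hi⟩ K (by rw [← h𝒦'eq ⟨i, hi⟩]; exact hK)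
      have := le_trans (EMetric.edist_le_diam_of_mem hkx hky) h
      rw [edist_dist] at this
      exact (ENNReal.ofReal_le_ofReal_iff hs.le).mp this
    have hsmall : s / c ^ (3 * i + 3) ≤ s / c ^ 3 := div_pow_anti hc1 hs (by omega)
    have hd : dist x y ≤ s + 2 * s / c ^ 3 := by
      have t : dist x y ≤ dist x kx + dist kx ky + dist ky y := dist_triangle4 x kx ky y
      have e3 : dist ky y = dist y ky := dist_comm ky y
      have : 2 * s / c ^ 3 = 2 * (s / c ^ 3) := by ring
      nlinarith [hxk, hyk, hkk]
    rw [edist_dist]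
    exact ENNReal.ofReal_le_ofReal hd
  · -- multiplicity bound
    intro z
    set S := {L ∈ ℒ | ∃ x ∈ L, dist z x < s / c ^ (3 * m + 4)} with hS
    classical
    set f : Set Z → Fin (m + 1) := fun L =>
      if h : ∃ i < m + 1, ∃ K ∈ 𝒦' i, L = H c s 𝒦' i K then
        ⟨h.choose, h.choose_spec.1⟩ else 0 with hf
    have hinj : Set.InjOn f S := by
      intro L₁ hL₁ L₂ hL₂ hfeq
      obtain ⟨hL₁ℒ, x₁, hx₁, hzx₁⟩ := hL₁
      obtain ⟨hL₂ℒ, x₂, hx₂, hzx₂⟩ := hL₂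
      have h₁ : ∃ i < m + 1, ∃ K ∈ 𝒦' i, L₁ = H c s 𝒦' i K := hL₁ℒ
      have h₂ : ∃ i < m + 1, ∃ K ∈ 𝒦' i, L₂ = H c s 𝒦' i K := hL₂ℒ
      obtain ⟨hi₁, K₁, hK₁, hLK₁⟩ := h₁.choose_spec
      obtain ⟨hi₂, K₂, hK₂, hLK₂⟩ := h₂.choose_spec
      have hfeq' : h₁.choose = h₂.choose := by
        have e1 : f L₁ = ⟨h₁.choose, hi₁⟩ := by rw [hf]; exact dif_pos h₁
        have e2 : f L₂ = ⟨h₂.choose, hi₂⟩ := by rw [hf]; exact dif_pos h₂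
        rw [e1, e2] at hfeq
        exact Fin.mk.inj_iff.mp hfeq
      rw [← hfeq'] at hK₂ hLK₂
      have hAB := key z h₁.choose hi₁ K₁ K₂ hK₁ hK₂ x₁ (hLK₁ ▸ hx₁) x₂
        (hLK₂ ▸ hx₂) hzx₁ hzx₂
      rw [hLK₁, hLK₂, hAB]
    calc S.encard = (f '' S).encard := (hinj.encard_image).symm
      _ ≤ (Set.univ : Set (Fin (m + 1))).encard := Set.encard_mono (Set.subset_univ _)
      _ = (m + 1 : ℕ∞) := by
          rw [Set.encard_univ]
          simp [ENat.card_eq_coe_fintype_card]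
end

section
/- Let (Z, ρ) be a metric space satisfying the hypothesis of the handle construction: there is c > 10 and integer m ≥ 0 such that for all sufficiently small s > 0 there is a cover K of Z, partitioned into K_1, ..., K_{m+1}, with all elements of diameter ≤ s, and such that for distinct A, B ∈ K_i with a ∈ A, b ∈ B and ρ(a,b) < s/c^{3i-1} there is e in some element of a lower-index subcollection K_k (k < i) with ρ(a,e) < s/c^{3i-2} and ρ(b,e) < s/c^{3i-2}. Fix such an s, and let H(K) for K ∈ K_i be defined by H(K) = N_{s/c^{3i}}(K) minus the union of all handles of lower-index sets. Then handles of sets in the same subcollection K_i are pairwise disjoint, and no point of Z lies within distance s/c^{3m+4} of two distinct handles H(A), H(B) with A, B in the same subcollection. -/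
open Set

/-- Handles of sets in the same subcollection are pairwise disjoint and no
point lies within distance `s/c^{3m+4}` of two distinct handles of the same
index.  Here `handle i K = N_{s/c^{3(i+1)}}(K) \ (union of lower-index handles)`. -/
theorem handles_disjoint {Z : Type*} [MetricSpace Z] (c : ℝ) (hc : 10 < c) (m : ℕ)
    (s : ℝ) (hs : 0 < s)
    (𝒦 : Fin (m + 1) → Set (Set Z))
    (hcover : (⋃ i, ⋃₀ 𝒦 i) = Set.univ)
    (hdisj : ∀ i j : Fin (m + 1), i ≠ j → Disjoint (𝒦 i) (𝒦 j))
    (hdiam : ∀ i : Fin (m + 1), ∀ K ∈ 𝒦 i, EMetric.diam K ≤ ENNReal.ofReal s)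
    (hsep : ∀ i : Fin (m + 1), ∀ A ∈ 𝒦 i, ∀ B ∈ 𝒦 i, A ≠ B →
      ∀ a ∈ A, ∀ b ∈ B, dist a b < s / c ^ (3 * ((i : ℕ) + 1) - 1) →
        ∃ k : Fin (m + 1), (k : ℕ) < (i : ℕ) ∧ ∃ E ∈ 𝒦 k, ∃ e ∈ E,
          dist a e < s / c ^ (3 * ((i : ℕ) + 1) - 2) ∧
          dist b e < s / c ^ (3 * ((i : ℕ) + 1) - 2))
    (handle : Fin (m + 1) → Set Z → Set Z)
    (hhandle : ∀ i : Fin (m + 1), ∀ K : Set Z,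
      handle i K = {z : Z | ∃ x ∈ K, dist z x < s / c ^ (3 * ((i : ℕ) + 1))} \
        (⋃ k : Fin (m + 1), ⋃ (_ : (k : ℕ) < (i : ℕ)), ⋃ K' ∈ 𝒦 k, handle k K')) :
    (∀ i : Fin (m + 1), ∀ A ∈ 𝒦 i, ∀ B ∈ 𝒦 i, A ≠ B →
        Disjoint (handle i A) (handle i B)) ∧
    (∀ z : Z, ∀ i : Fin (m + 1), ∀ A ∈ 𝒦 i, ∀ B ∈ 𝒦 i, A ≠ B →
      ¬ ((∃ x ∈ handle i A, dist z x < s / c ^ (3 * m + 4)) ∧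
         (∃ y ∈ handle i B, dist z y < s / c ^ (3 * m + 4)))) := by
  have hc0 : (0:ℝ) < c := by linarith
  have hpos : ∀ n : ℕ, 0 < s / c ^ n := fun n => div_pos hs (pow_pos hc0 n)
  have hmono : ∀ p q : ℕ, p ≤ q → s / c ^ q ≤ s / c ^ p := by
    intro p q hpq
    exact div_le_div_of_nonneg_left hs.le (pow_pos hc0 p)
      (pow_le_pow_right₀ (by linarith) hpq)
  have hstep : ∀ n : ℕ, 10 * (s / c ^ (n + 1)) ≤ s / c ^ n := by
    intro n
    rw [pow_succ, ← div_div]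
    have h1 : s / c ^ n / c ≤ s / c ^ n / 10 :=
      div_le_div_of_nonneg_left (hpos n).le (by norm_num) hc.le
    linarith
  -- key claim: points in distinct handles of the same index are far apart
  have key : ∀ i : Fin (m + 1), ∀ A ∈ 𝒦 i, ∀ B ∈ 𝒦 i, A ≠ B →
      ∀ x ∈ handle i A, ∀ y ∈ handle i B,
        2 * (s / c ^ (3 * m + 4)) ≤ dist x y := by
    intro i A hA B hB hAB x hx y hy
    by_contra hlt
    push_neg at hlt
    rw [hhandle] at hx hy
    obtain ⟨⟨a, ha, hxa⟩, hxU⟩ := hx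
    obtain ⟨⟨b, hb, hyb⟩, _⟩ := hy
    have e0 : 3 * ((i : ℕ) + 1) = 3 * (i : ℕ) + 3 := by ring
    rw [e0] at hxa hyb
    have him : (i : ℕ) ≤ m := Nat.lt_succ_iff.mp i.isLt
    -- dist a b bound
    have hab : dist a b < s / c ^ (3 * ((i : ℕ) + 1) - 1) := by
      have e1 : 3 * ((i : ℕ) + 1) - 1 = 3 * (i : ℕ) + 2 := by omega
      rw [e1]
      have h4 : dist a b ≤ dist a x + dist x y + dist y b := dist_triangle4 a x y b
      have h5 : s / c ^ (3 * m + 4) ≤ s / c ^ (3 * (i : ℕ) + 3) := hmono _ _ (by omega)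
      have h6 := hstep (3 * (i : ℕ) + 2)
      rw [show 3 * (i : ℕ) + 2 + 1 = 3 * (i : ℕ) + 3 from by omega] at h6
      have hp := hpos (3 * (i : ℕ) + 3)
      have hp2 := hpos (3 * m + 4)
      rw [dist_comm x a] at hxa
      linarith
    obtain ⟨k, hki, E, hE, e, heE, hae, _⟩ :=
      hsep i A hA B hB hAB a ha b hb hab
    have e2 : 3 * ((i : ℕ) + 1) - 2 = 3 * (i : ℕ) + 1 := by omega
    rw [e2] at hae
    -- x is within s/c^{3(k+1)} of e ∈ E
    have hxe : dist x e < s / c ^ (3 * ((k : ℕ) + 1)) := by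
      have h7 : dist x e ≤ dist x a + dist a e := dist_triangle x a e
      have h8 : s / c ^ (3 * (i : ℕ)) ≤ s / c ^ (3 * ((k : ℕ) + 1)) :=
        hmono _ _ (by omega)
      have h9 := hstep (3 * (i : ℕ))
      have h10 : s / c ^ (3 * (i : ℕ) + 3) ≤ s / c ^ (3 * (i : ℕ) + 1) :=
        hmono _ _ (by omega)
      have hp := hpos (3 * (i : ℕ))
      linarith
    -- hence x lies in some handle of index < i
    apply hxU
    by_cases hmem : x ∈ ⋃ k' : Fin (m + 1), ⋃ (_ : (k' : ℕ) < (k : ℕ)),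
        ⋃ K' ∈ 𝒦 k', handle k' K'
    · simp only [mem_iUnion] at hmem ⊢
      obtain ⟨k', hk'k, K', hK', hx'⟩ := hmem
      exact ⟨k', lt_trans hk'k hki, K', hK', hx'⟩
    · have hxk : x ∈ handle k E := by
        rw [hhandle]
        exact ⟨⟨e, heE, hxe⟩, hmem⟩
      simp only [mem_iUnion]
      exact ⟨k, hki, E, hE, hxk⟩
  constructor
  · intro i A hA B hB hAB
    rw [Set.disjoint_left]
    intro x hxA hxB
    have h := key i A hA B hB hAB x hxA x hxB
    rw [dist_self] at h
    have := hpos (3 * m + 4)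
    linarith
  · rintro z i A hA B hB hAB ⟨⟨x, hx, hzx⟩, ⟨y, hy, hzy⟩⟩
    have h := key i A hA B hB hAB x hx y hy
    have h2 : dist x y ≤ dist x z + dist z y := dist_triangle x z y
    rw [dist_comm x z] at h2
    linarith
end

section
/- Let C be a good cell structure on an n-dimensional polytope U, let Ω ∈ C be an n-dimensional cell, and let W be the intersection of Ω with a hyperplane that meets the relative interior of Ω. Let C' be obtained from C by replacing each cell E ⊆ Ω for which E \ W is disconnected by the three cells E ∩ W and the closures E_1, E_2 of the two components of E \ W. Then C' is again a good cell structure on U. -/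
/-!
Every point `x ∈ U` lies in the relative interior of a cell `H`, and `H` is contained in every
cell through `x`. After cutting, the new cell carrying `x` is `H` itself or the piece of `H` on
the side of `x` (the slice when `f x = c`). The relative interior of a piece of a cut cell is the
part of the relative interior of the cell on the corresponding open side (or on the hyperplane),
so the carriers again have pairwise disjoint relative interiors and are minimal among the new
cells through `x`; this gives (C1)–(C4), faces being handled by the fact that a linear functional
maximal at a relative interior point is constant.

For (C5), a face `F` of a cut cell `E` witnessing (C5) for a cell on one side of the hyperplane
is replaced by `F ∩ {f ≤ c}` or `F ∩ {c ≤ f}`, a face of the same dimension of a piece of `E`, and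
the slice `E ∩ {f = c}` is a facet of `E ∩ {f ≤ c}`. For the piece `E ∩ {f ≤ c}` one needs in
addition a witness inside `{f ≤ c}`: descending from `Ω` along supporting hyperplanes gives a cell
`D ⊆ Ω` with a face of dimension `dim E` containing `E`; `D` is cut, and the corresponding face of
`D ∩ {f ≤ c}` is the witness.
-/

open Set

/-- A polytope in `ℝ^d` is a finite intersection of closed half-spaces. -/
def IsPolytope {d : ℕ} (P : Set (Fin d → ℝ)) : Prop :=
  ∃ (k : ℕ) (f : Fin k → ((Fin d → ℝ) →ₗ[ℝ] ℝ)) (c : Fin k → ℝ),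
    P = ⋂ i, {x | f i x ≤ c i}

/-- The dimension of a subset of `ℝ^d`: the dimension of its affine span. -/
noncomputable def pdim {d : ℕ} (P : Set (Fin d → ℝ)) : ℕ :=
  Module.finrank ℝ (affineSpan ℝ P).direction

/-- `F` is a face of `P`: the intersection of `P` with a hyperplane such that
`P` lies in one of the two closed half-spaces bounded by it. -/
def IsFaceOf {d : ℕ} (F P : Set (Fin d → ℝ)) : Prop :=
  ∃ (f : (Fin d → ℝ) →ₗ[ℝ] ℝ) (c : ℝ), f ≠ 0 ∧ (∀ x ∈ P, f x ≤ c) ∧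
    F = P ∩ {x | f x = c}

/-- A cell structure on a polytope `U ⊆ ℝ^d`: a finite collection of polytopal
cells covering `U`, with intersections of cells unions of cells, pairwise
disjoint relative interiors, and faces of cells unions of cells. -/
structure IsCellStructure {d : ℕ} (U : Set (Fin d → ℝ))
    (𝒞 : Set (Set (Fin d → ℝ))) : Prop where
  finite : 𝒞.Finite
  polytope : ∀ C ∈ 𝒞, IsPolytope C
  cover : ⋃₀ 𝒞 = U
  inter : ∀ C ∈ 𝒞, ∀ D ∈ 𝒞, ∃ 𝒮 ⊆ 𝒞, C ∩ D = ⋃₀ 𝒮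
  relint_disjoint : ∀ C ∈ 𝒞, ∀ D ∈ 𝒞, C ≠ D →
    intrinsicInterior ℝ C ∩ intrinsicInterior ℝ D = ∅
  faces : ∀ C ∈ 𝒞, ∀ F : Set (Fin d → ℝ), IsFaceOf F C → ∃ 𝒮 ⊆ 𝒞, F = ⋃₀ 𝒮

/-- A cell structure on an `n`-dimensional polytope is good if every cell of
dimension `i < n` is the intersection of the `i`-dimensional faces of the
cells of dimension `> i` that contain it. -/
def IsGoodCellStructure {d : ℕ} (n : ℕ) (U : Set (Fin d → ℝ))
    (𝒞 : Set (Set (Fin d → ℝ))) : Prop :=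
  IsCellStructure U 𝒞 ∧ pdim U = n ∧
    ∀ C ∈ 𝒞, pdim C < n →
      C = ⋂₀ {F | ∃ E ∈ 𝒞, pdim C < pdim E ∧ IsFaceOf F E ∧
        pdim F = pdim C ∧ C ⊆ F}

open Filter Topology Metric

theorem Set.Finite.eventually_forall_mem_imp_mem {X : Type*} [TopologicalSpace X]
    {𝒮 : Set (Set X)} (h𝒮 : 𝒮.Finite) (hcl : ∀ K ∈ 𝒮, IsClosed K) (z : X) :
    ∀ᶠ w in 𝓝 z, ∀ K ∈ 𝒮, w ∈ K → z ∈ K := by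
  refine (eventually_all_finite h𝒮).2 fun K hK => ?_
  by_cases hz : z ∈ K
  · exact Eventually.of_forall fun _ _ => hz
  · filter_upwards [(hcl K hK).isOpen_compl.mem_nhds hz] with w hw hwK using absurd hwK hw

theorem Convex.exists_nonpos_and_exists_neg_of_zero_notMem_interior {W : Type*}
    [NormedAddCommGroup W] [NormedSpace ℝ W] {T : Set W} (hT : Convex ℝ T)
    (h0 : (0 : W) ∉ interior T) (hint : (interior T).Nonempty) :
    ∃ φ : StrongDual ℝ W, (∀ a ∈ T, φ a ≤ 0) ∧ ∃ a ∈ T, φ a < 0 := by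
  obtain ⟨φ, hφ0, hφ⟩ := geometric_hahn_banach_of_nonempty_interior_point hT h0 hint
  rw [map_zero] at hφ
  refine ⟨φ, hφ, not_forall_not.1 fun h => hφ0 ?_⟩
  -- otherwise `ker φ` contains `T`, which has nonempty interior
  refine ContinuousLinearMap.coe_injective (LinearMap.ker_eq_top.1 ?_)
  refine Submodule.eq_top_of_nonempty_interior' _ (hint.mono (interior_mono fun a ha => ?_))
  exact le_antisymm (hφ a ha) (not_lt.1 fun hlt => h a ⟨ha, hlt⟩)

section IntrinsicInterior

variable {V : Type*} [NormedAddCommGroup V] [NormedSpace ℝ V] {s t : Set V} {x y : V}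

theorem mem_intrinsicInterior_iff_ball :
    x ∈ intrinsicInterior ℝ s ↔ x ∈ s ∧ ∃ ε > 0, ball x ε ∩ affineSpan ℝ s ⊆ s := by
  constructor
  · rintro ⟨y, hy, rfl⟩
    obtain ⟨ε, hε, hball⟩ := Metric.mem_nhds_iff.1 (mem_interior_iff_mem_nhds.1 hy)
    refine ⟨interior_subset (s := ((↑) ⁻¹' s : Set (affineSpan ℝ s))) hy, ε, hε, ?_⟩
    exact fun z ⟨hz, hzA⟩ => hball (show ⟨z, hzA⟩ ∈ ball y ε from hz)
  · rintro ⟨hxs, ε, hε, hball⟩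
    refine ⟨⟨x, subset_affineSpan ℝ s hxs⟩, mem_interior_iff_mem_nhds.2 ?_, rfl⟩
    exact Metric.mem_nhds_iff.2 ⟨ε, hε, fun z hz => hball ⟨hz, z.2⟩⟩

theorem intrinsicInterior_subset_of_affineSpan_eq (hts : t ⊆ s)
    (hspan : affineSpan ℝ t = affineSpan ℝ s) :
    intrinsicInterior ℝ t ⊆ intrinsicInterior ℝ s := by
  intro x hx
  obtain ⟨hxt, ε, hε, hball⟩ := mem_intrinsicInterior_iff_ball.1 hx
  exact mem_intrinsicInterior_iff_ball.2 ⟨hts hxt, ε, hε, hspan ▸ hball.trans hts⟩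

theorem mem_intrinsicInterior_inter_of_mem_nhds (hx : x ∈ intrinsicInterior ℝ s)
    (ht : t ∈ 𝓝 x) : x ∈ intrinsicInterior ℝ (s ∩ t) := by
  obtain ⟨hxs, ε, hε, hball⟩ := mem_intrinsicInterior_iff_ball.1 hx
  obtain ⟨δ, hδ, hδt⟩ := Metric.mem_nhds_iff.1 ht
  refine mem_intrinsicInterior_iff_ball.2
    ⟨⟨hxs, hδt (mem_ball_self hδ)⟩, min ε δ, by positivity, ?_⟩
  rintro y ⟨hy, hyA⟩
  exact ⟨hball ⟨ball_subset_ball (min_le_left ε δ) hy, affineSpan_mono ℝ inter_subset_left hyA⟩,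
    hδt (ball_subset_ball (min_le_right ε δ) hy)⟩

theorem LinearMap.apply_eq_of_mem_affineSpan {g : V →ₗ[ℝ] ℝ} {b : ℝ}
    (hs : ∀ y ∈ s, g y = b) (hx : x ∈ affineSpan ℝ s) : g x = b := by
  have himage : g.toAffineMap '' s ⊆ {b} := by
    rintro _ ⟨y, hy, rfl⟩
    exact hs y hy
  have := affineSpan_mono ℝ himage
    (AffineSubspace.map_span g.toAffineMap s ▸ AffineSubspace.mem_map_of_mem g.toAffineMap hx)
  simpa using this

theorem mem_intrinsicInterior_inter_hyperplane {g : V →ₗ[ℝ] ℝ}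
    (hx : x ∈ intrinsicInterior ℝ s) : x ∈ intrinsicInterior ℝ (s ∩ {y | g y = g x}) := by
  obtain ⟨hxs, ε, hε, hball⟩ := mem_intrinsicInterior_iff_ball.1 hx
  refine mem_intrinsicInterior_iff_ball.2 ⟨⟨hxs, rfl⟩, ε, hε, ?_⟩
  rintro y ⟨hy, hyA⟩
  exact ⟨hball ⟨hy, affineSpan_mono ℝ inter_subset_left hyA⟩,
    g.apply_eq_of_mem_affineSpan (fun z hz => hz.2) hyA⟩

theorem eventually_add_smul_mem_of_mem_intrinsicInterior (hx : x ∈ intrinsicInterior ℝ s)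
    {v : V} (hv : v ∈ (affineSpan ℝ s).direction) : ∀ᶠ t : ℝ in 𝓝 0, x + t • v ∈ s := by
  obtain ⟨hxs, ε, hε, hball⟩ := mem_intrinsicInterior_iff_ball.1 hx
  have hlim : Tendsto (fun t : ℝ => x + t • v) (𝓝 0) (𝓝 x) := by
    have : Continuous fun t : ℝ => x + t • v := by fun_prop
    simpa using this.tendsto 0
  filter_upwards [hlim (ball_mem_nhds x hε)] with t ht
  have hA := AffineSubspace.vadd_mem_of_mem_direction (Submodule.smul_mem _ t hv)
    (subset_affineSpan ℝ s hxs)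
  rw [vadd_eq_add, add_comm] at hA
  exact hball ⟨ht, hA⟩

theorem exists_pos_add_smul_mem_of_mem_intrinsicInterior (hx : x ∈ intrinsicInterior ℝ s)
    {v : V} (hv : v ∈ (affineSpan ℝ s).direction) : ∃ t : ℝ, 0 < t ∧ x + t • v ∈ s :=
  ((eventually_add_smul_mem_of_mem_intrinsicInterior hx hv).filter_mono
    (nhdsWithin_le_nhds (s := Ioi 0)) |>.and self_mem_nhdsWithin).exists.imp
    fun _ ht => ⟨ht.2, ht.1⟩

theorem exists_mem_openSegment_of_mem_intrinsicInterior (hx : x ∈ intrinsicInterior ℝ s)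
    (hy : y ∈ s) : ∃ w ∈ s, x ∈ openSegment ℝ y w := by
  obtain ⟨t, ht, hw⟩ := exists_pos_add_smul_mem_of_mem_intrinsicInterior hx
    (AffineSubspace.vsub_mem_direction (subset_affineSpan ℝ s (intrinsicInterior_subset hx))
      (subset_affineSpan ℝ s hy))
  refine ⟨_, hw, t / (1 + t), 1 / (1 + t), by positivity, by positivity, by field_simp; ring, ?_⟩
  rw [vsub_eq_sub]
  match_scalars <;> field_simp
  ring

theorem LinearMap.eq_of_le_of_mem_intrinsicInterior {g : V →ₗ[ℝ] ℝ} {b : ℝ}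
    (hle : ∀ y ∈ s, g y ≤ b) (hx : x ∈ intrinsicInterior ℝ s) (hxb : g x = b) :
    ∀ y ∈ s, g y = b := by
  intro y hy
  obtain ⟨w, hw, a, a', ha, ha', haa', rfl⟩ :=
    exists_mem_openSegment_of_mem_intrinsicInterior hx hy
  simp only [map_add, map_smul, smul_eq_mul] at hxb
  refine le_antisymm (hle y hy) (not_lt.1 fun h => ?_)
  nlinarith [mul_lt_mul_of_pos_left h ha, mul_le_mul_of_nonneg_left (hle w hw) ha'.le,
    show (a + a') * b = b by rw [haa', one_mul]]

theorem Convex.openSegment_subset_intrinsicInterior (hs : Convex ℝ s)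
    (hx : x ∈ intrinsicInterior ℝ s) (hy : y ∈ s) :
    openSegment ℝ x y ⊆ intrinsicInterior ℝ s := by
  rintro _ ⟨a, b, ha, hb, hab, rfl⟩
  obtain ⟨hxs, ε, hε, hball⟩ := mem_intrinsicInterior_iff_ball.1 hx
  have hz := hs hxs hy ha.le hb.le hab
  refine mem_intrinsicInterior_iff_ball.2 ⟨hz, a * ε, by positivity, ?_⟩
  rintro w ⟨hw, hwA⟩
  -- `w` is the image under the homothety of centre `y` and ratio `a` of a point `w'` near `x`
  set w' := x + a⁻¹ • (w - (a • x + b • y))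
  have hw' : w' ∈ s := by
    refine hball ⟨?_, ?_⟩
    · rw [mem_ball, dist_eq_norm, add_sub_cancel_left, norm_smul, norm_inv,
        Real.norm_of_nonneg ha.le, inv_mul_lt_iff₀ ha, ← dist_eq_norm]
      exact hw
    · have hA := AffineSubspace.vadd_mem_of_mem_direction (Submodule.smul_mem _ a⁻¹
        (AffineSubspace.vsub_mem_direction hwA (subset_affineSpan ℝ s hz)))
        (subset_affineSpan ℝ s hxs)
      rwa [vadd_eq_add, add_comm] at hA
  have hw_eq : w = a • w' + b • y := by
    simp only [w', smul_add, smul_smul, mul_inv_cancel₀ ha.ne', one_smul]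
    abel
  exact hw_eq ▸ hs hw' hy ha.le hb.le hab

theorem Convex.exists_mem_sUnion_not_subset_affineSubspace {F : Set V} (hF : Convex ℝ F)
    {𝒮 : Set (Set V)} (hF𝒮 : F = ⋃₀ 𝒮) (h𝒮 : 𝒮.Finite) (hcl : ∀ K ∈ 𝒮, IsClosed K)
    {A : AffineSubspace ℝ V} {z y : V} (hz : z ∈ F) (hzA : z ∈ A) (hy : y ∈ F)
    (hyA : y ∉ A) : ∃ K ∈ 𝒮, z ∈ K ∧ ¬ K ⊆ A := by
  have hlim : Tendsto (AffineMap.lineMap z y) (𝓝[>] (0 : ℝ)) (𝓝 z) := by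
    have := (AffineMap.lineMap_continuous (p := z) (q := y) (R := ℝ)).tendsto 0
    exact (AffineMap.lineMap_apply_zero z y (k := ℝ) ▸ this).mono_left nhdsWithin_le_nhds
  -- a point of `F` on the segment from `z` to `y`, close enough to `z` that its cell contains `z`
  obtain ⟨t, hthrough, ht⟩ := ((hlim.eventually (h𝒮.eventually_forall_mem_imp_mem hcl z)).and
    (Ioo_mem_nhdsGT one_pos)).exists
  obtain ⟨K, hK, hwK⟩ : AffineMap.lineMap z y t ∈ ⋃₀ 𝒮 :=
    hF𝒮 ▸ hF.lineMap_mem hz hy (Ioo_subset_Icc_self ht)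
  refine ⟨K, hK, hthrough K hK hwK, fun hKA => hyA ?_⟩
  refine AffineSubspace.right_mem_of_wbtw ⟨t, Ioo_subset_Icc_self ht, rfl⟩ hzA (hKA hwK) ?_
  rw [ne_comm, Ne, AffineMap.lineMap_eq_left_iff, not_or]
  exact ⟨fun hzy => hyA (hzy ▸ hzA), ht.1.ne'⟩

end IntrinsicInterior

section Cut

variable {V : Type*} [NormedAddCommGroup V] [NormedSpace ℝ V] {s : Set V} {x p q : V}
  {f : V →ₗ[ℝ] ℝ} {c : ℝ}

theorem LinearMap.exists_apply_lineMap_eq (hp : f p < c) (hq : c < f q) :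
    ∃ t ∈ Ioo (0 : ℝ) 1, f (AffineMap.lineMap p q t) = c := by
  have hpq : 0 < f q - f p := by linarith
  refine ⟨(c - f p) / (f q - f p), ⟨by positivity, (div_lt_one hpq).2 (by linarith)⟩, ?_⟩
  rw [AffineMap.lineMap_apply_module', map_add, map_smul, map_sub, smul_eq_mul,
    div_mul_cancel₀ _ hpq.ne']
  ring

theorem Convex.affineSpan_inter_le_eq (hs : Convex ℝ s) (hp : p ∈ s) (hpc : f p < c) :
    affineSpan ℝ (s ∩ {x | f x ≤ c}) = affineSpan ℝ s := by
  refine (affineSpan_mono ℝ inter_subset_left).antisymm (affineSpan_le.2 fun x hx => ?_)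
  rcases le_or_gt (f x) c with hxc | hxc
  · exact subset_affineSpan ℝ _ ⟨hx, hxc⟩
  -- `x` lies on the line through `p` and the point where `[p, x]` crosses the hyperplane
  obtain ⟨t, ht, htc⟩ := f.exists_apply_lineMap_eq hpc hxc
  refine AffineSubspace.right_mem_of_wbtw ⟨t, Ioo_subset_Icc_self ht, rfl⟩
    (subset_affineSpan ℝ _ ⟨hp, hpc.le⟩)
    (subset_affineSpan ℝ _ ⟨hs.lineMap_mem hp hx (Ioo_subset_Icc_self ht), htc.le⟩)
    fun hpt => hpc.ne (hpt ▸ htc)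

theorem Convex.intrinsicInterior_inter_le_subset (hs : Convex ℝ s) (hp : p ∈ s)
    (hpc : f p < c) (hq : q ∈ s) (hqc : c < f q) :
    intrinsicInterior ℝ (s ∩ {x | f x ≤ c}) ⊆ intrinsicInterior ℝ s ∩ {x | f x < c} := by
  have hspan := hs.affineSpan_inter_le_eq hp hpc
  intro x hx
  refine ⟨intrinsicInterior_subset_of_affineSpan_eq inter_subset_left hspan hx,
    show f x < c from (intrinsicInterior_subset hx).2.lt_of_ne fun hxc => ?_⟩
  have hqx : q - x ∈ (affineSpan ℝ (s ∩ {x | f x ≤ c})).direction := by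
    rw [hspan]
    exact AffineSubspace.vsub_mem_direction (subset_affineSpan ℝ s hq)
      (subset_affineSpan ℝ s (intrinsicInterior_subset hx).1)
  obtain ⟨t, ht, -, hle⟩ := exists_pos_add_smul_mem_of_mem_intrinsicInterior hx hqx
  have : f (x + t • (q - x)) ≤ c := hle
  rw [map_add, map_smul, map_sub, smul_eq_mul, hxc] at this
  nlinarith

end Cut

section FiniteDimensional

variable {V : Type*} [NormedAddCommGroup V] [NormedSpace ℝ V] [FiniteDimensional ℝ V]
  {s : Set V} {x p q : V} {f : V →ₗ[ℝ] ℝ} {c : ℝ}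

theorem Convex.exists_supporting_functional (hs : Convex ℝ s) (hx : x ∈ s)
    (hxr : x ∉ intrinsicInterior ℝ s) :
    ∃ g : V →ₗ[ℝ] ℝ, (∀ y ∈ s, g y ≤ g x) ∧ ∃ z ∈ s, g z < g x := by
  -- separate `0` from `s - x` inside the direction of `affineSpan ℝ s`, then extend to `V`
  set A := affineSpan ℝ s
  let x' : A := ⟨x, subset_affineSpan ℝ s hx⟩
  have : Nonempty A := ⟨x'⟩
  let e := AffineIsometryEquiv.vaddConst ℝ x'
  set T : Set A.direction := (A.subtype.comp e.toAffineEquiv.toAffineMap) ⁻¹' s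
  have hT : ∀ v : A.direction, v ∈ T ↔ (v : V) + x ∈ s := fun v => by
    simp [T, e, x']
  have hinterior : interior T = e ⁻¹' interior ((↑) ⁻¹' s : Set A) :=
    (e.toHomeomorph.preimage_interior (Subtype.val ⁻¹' s : Set A)).symm
  have hT0 : (0 : A.direction) ∉ interior T := by
    rw [hinterior]
    exact fun h0 => hxr ⟨e 0, h0, by simp [e, x']⟩
  have hTint : (interior T).Nonempty := by
    obtain ⟨_, r, hr, rfl⟩ := Set.Nonempty.intrinsicInterior hs ⟨x, hx⟩
    exact ⟨e.symm r, by rwa [hinterior, mem_preimage, e.apply_symm_apply]⟩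
  obtain ⟨φ, hφ, a, haT, ha⟩ :=
    (hs.affine_preimage _).exists_nonpos_and_exists_neg_of_zero_notMem_interior hT0 hTint
  obtain ⟨g, hg⟩ := LinearMap.exists_extend (φ : A.direction →ₗ[ℝ] ℝ)
  have hgφ : ∀ v : A.direction, g (v + x) = φ v + g x := fun v => by
    rw [map_add]
    exact congrArg (· + g x) (LinearMap.congr_fun hg v)
  refine ⟨g, fun y hy => ?_, _, (hT a).1 haT, by rw [hgφ]; linarith⟩
  have hyx : y - x ∈ A.direction :=
    AffineSubspace.vsub_mem_direction (subset_affineSpan ℝ s hy) (subset_affineSpan ℝ s hx)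
  have hgy := hgφ ⟨y - x, hyx⟩
  rw [Submodule.coe_mk, sub_add_cancel] at hgy
  linarith [hφ ⟨y - x, hyx⟩ ((hT _).2 (by simpa using hy))]

theorem Convex.intrinsicInterior_inter_hyperplane_subset (hs : Convex ℝ s) (hp : p ∈ s)
    (hpc : f p < c) (hq : q ∈ s) (hqc : c < f q) :
    intrinsicInterior ℝ (s ∩ {x | f x = c}) ⊆ intrinsicInterior ℝ s := by
  obtain ⟨r, hr⟩ := Set.Nonempty.intrinsicInterior hs ⟨p, hp⟩
  obtain ⟨z, hz, hzc⟩ : ∃ z ∈ intrinsicInterior ℝ s, f z = c := by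
    rcases lt_trichotomy (f r) c with hrc | hrc | hrc
    · obtain ⟨t, ht, htc⟩ := f.exists_apply_lineMap_eq hrc hqc
      exact ⟨_, hs.openSegment_subset_intrinsicInterior hr hq
        (lineMap_mem_openSegment ℝ r q ht), htc⟩
    · exact ⟨r, hr, hrc⟩
    · obtain ⟨t, ht, htc⟩ := f.exists_apply_lineMap_eq hpc hrc
      refine ⟨_, hs.openSegment_subset_intrinsicInterior hr hp ?_, htc⟩
      exact openSegment_symm ℝ r p ▸ lineMap_mem_openSegment ℝ p r ht
  -- prolong the segment from `z` through `y` inside the slice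
  intro y hy
  obtain ⟨w, hw, hyw⟩ :=
    exists_mem_openSegment_of_mem_intrinsicInterior hy ⟨intrinsicInterior_subset hz, hzc⟩
  exact hs.openSegment_subset_intrinsicInterior hz hw.1 hyw

theorem mem_intrinsicInterior_inter_le (hx : x ∈ intrinsicInterior ℝ s) (hxc : f x < c) :
    x ∈ intrinsicInterior ℝ (s ∩ {y | f y ≤ c}) :=
  mem_intrinsicInterior_inter_of_mem_nhds hx <| mem_of_superset
    ((isOpen_lt f.continuous_of_finiteDimensional continuous_const).mem_nhds hxc)
    fun _ hy => le_of_lt (α := ℝ) hy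

end FiniteDimensional

section Polytope

variable {d : ℕ} {P Q : Set (Fin d → ℝ)}

theorem IsPolytope.convex (h : IsPolytope P) : Convex ℝ P := by
  obtain ⟨k, f, c, rfl⟩ := h
  exact convex_iInter fun i => convex_halfSpace_le (f i).isLinear (c i)

theorem IsPolytope.isClosed (h : IsPolytope P) : IsClosed P := by
  obtain ⟨k, f, c, rfl⟩ := h
  exact isClosed_iInter fun i =>
    isClosed_le (f i).continuous_of_finiteDimensional continuous_const

theorem IsPolytope.inter (hP : IsPolytope P) (hQ : IsPolytope Q) : IsPolytope (P ∩ Q) := by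
  obtain ⟨k, f, c, rfl⟩ := hP
  obtain ⟨l, g, b, rfl⟩ := hQ
  refine ⟨k + l, Fin.append f g, Fin.append c b, ?_⟩
  ext x
  simp [Fin.forall_fin_add]

theorem isPolytope_setOf_le (f : (Fin d → ℝ) →ₗ[ℝ] ℝ) (c : ℝ) : IsPolytope {x | f x ≤ c} :=
  ⟨1, fun _ => f, fun _ => c, (iInter_const _).symm⟩

theorem isPolytope_setOf_eq (f : (Fin d → ℝ) →ₗ[ℝ] ℝ) (c : ℝ) : IsPolytope {x | f x = c} := by
  have : {x | f x = c} = {x | f x ≤ c} ∩ {x | (-f) x ≤ -c} := by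
    ext x
    simp [le_antisymm_iff]
  exact this ▸ (isPolytope_setOf_le f c).inter (isPolytope_setOf_le (-f) (-c))

end Polytope

section Dimension

variable {d : ℕ} {s t : Set (Fin d → ℝ)} {x w : Fin d → ℝ}

theorem pdim_mono (h : s ⊆ t) : pdim s ≤ pdim t :=
  Submodule.finrank_mono (AffineSubspace.direction_le (affineSpan_mono ℝ h))

theorem pdim_le_of_subset_affineSpan (h : s ⊆ affineSpan ℝ t) : pdim s ≤ pdim t := by
  have := pdim_mono h
  rwa [pdim, pdim, AffineSubspace.affineSpan_coe] at this

theorem pdim_lt_of_notMem_affineSpan (hst : s ⊆ t) (hs : s.Nonempty) (hw : w ∈ t)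
    (hws : w ∉ affineSpan ℝ s) : pdim s < pdim t := by
  refine lt_of_not_ge fun hts => hws ?_
  have hspan : affineSpan ℝ s = affineSpan ℝ t :=
    AffineSubspace.eq_of_direction_eq_of_nonempty_of_le
      (Submodule.eq_of_le_of_finrank_le
        (AffineSubspace.direction_le (affineSpan_mono ℝ hst)) hts)
      (hs.mono (subset_affineSpan ℝ s)) (affineSpan_mono ℝ hst)
  exact hspan ▸ subset_affineSpan ℝ t hw

theorem pdim_inter_hyperplane_lt {g : (Fin d → ℝ) →ₗ[ℝ] ℝ} (hx : x ∈ s) (hw : w ∈ s)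
    (hgw : g w ≠ g x) : pdim (s ∩ {y | g y = g x}) < pdim s :=
  pdim_lt_of_notMem_affineSpan inter_subset_left ⟨x, hx, rfl⟩ hw fun hwA =>
    hgw (g.apply_eq_of_mem_affineSpan (fun _ hy => hy.2) hwA)

end Dimension

section Faces

variable {d : ℕ} {C E F : Set (Fin d → ℝ)} {𝒞 : Set (Set (Fin d → ℝ))}

theorem IsFaceOf.subset (hF : IsFaceOf F E) : F ⊆ E := by
  obtain ⟨g, b, -, -, rfl⟩ := hF
  exact inter_subset_left

theorem IsFaceOf.inter (hF : IsFaceOf F E) (H : Set (Fin d → ℝ)) :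
    IsFaceOf (F ∩ H) (E ∩ H) := by
  obtain ⟨g, b, hg0, hg, rfl⟩ := hF
  exact ⟨g, b, hg0, fun x hx => hg x hx.1, inter_right_comm _ _ _⟩

/-- The faces whose intersection is required to be `C` by the goodness condition. -/
def facesThrough (𝒞 : Set (Set (Fin d → ℝ))) (C : Set (Fin d → ℝ)) : Set (Set (Fin d → ℝ)) :=
  {F | ∃ E ∈ 𝒞, pdim C < pdim E ∧ IsFaceOf F E ∧ pdim F = pdim C ∧ C ⊆ F}

theorem subset_sInter_facesThrough : C ⊆ ⋂₀ facesThrough 𝒞 C :=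
  subset_sInter fun _ ⟨_, _, _, _, _, hCF⟩ => hCF

theorem inter_mem_facesThrough {H : Set (Fin d → ℝ)} (hEH : E ∩ H ∈ 𝒞)
    (hEHdim : pdim (E ∩ H) = pdim E) (hF : IsFaceOf F E) (hCF : C ⊆ F ∩ H)
    (hFC : pdim F = pdim C) (hCE : pdim C < pdim E) : F ∩ H ∈ facesThrough 𝒞 C :=
  ⟨E ∩ H, hEH, hEHdim ▸ hCE, hF.inter H,
    le_antisymm (hFC ▸ pdim_mono inter_subset_left) (pdim_mono hCF), hCF⟩

end Faces

namespace IsCellStructure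

variable {d : ℕ} {U G H E D : Set (Fin d → ℝ)} {𝒞 : Set (Set (Fin d → ℝ))} {x : Fin d → ℝ}

theorem exists_mem_intrinsicInterior (h : IsCellStructure U 𝒞) (hG : G ∈ 𝒞) (hx : x ∈ G) :
    ∃ H ∈ 𝒞, H ⊆ G ∧ x ∈ intrinsicInterior ℝ H := by
  induction hn : pdim G using Nat.strong_induction_on generalizing G with
  | _ n ih =>
  by_cases hxG : x ∈ intrinsicInterior ℝ G
  · exact ⟨G, hG, subset_rfl, hxG⟩
  -- otherwise `x` lies on a proper face of `G`, which is a union of lower-dimensional cells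
  obtain ⟨g, hg, z, hz, hzx⟩ := (h.polytope G hG).convex.exists_supporting_functional hx hxG
  obtain ⟨𝒮, h𝒮, hF⟩ := h.faces G hG _ ⟨g, g x, by rintro rfl; simp at hzx, hg, rfl⟩
  obtain ⟨H₁, hH₁, hxH₁⟩ : x ∈ ⋃₀ 𝒮 := hF ▸ ⟨hx, rfl⟩
  have hH₁F : H₁ ⊆ G ∩ {y | g y = g x} := hF ▸ subset_sUnion_of_mem hH₁
  obtain ⟨H, hH, hHH₁, hxH⟩ := ih _
    (hn ▸ (pdim_mono hH₁F).trans_lt (pdim_inter_hyperplane_lt hx hz hzx.ne)) (h𝒮 hH₁) hxH₁ rfl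
  exact ⟨H, hH, hHH₁.trans (hH₁F.trans inter_subset_left), hxH⟩

theorem exists_mem_intrinsicInterior_of_mem (h : IsCellStructure U 𝒞) (hx : x ∈ U) :
    ∃ H ∈ 𝒞, x ∈ intrinsicInterior ℝ H := by
  obtain ⟨G, hG, hxG⟩ : x ∈ ⋃₀ 𝒞 := h.cover ▸ hx
  obtain ⟨H, hH, -, hxH⟩ := h.exists_mem_intrinsicInterior hG hxG
  exact ⟨H, hH, hxH⟩

theorem subset_of_mem_intrinsicInterior (h : IsCellStructure U 𝒞) (hH : H ∈ 𝒞) (hE : E ∈ 𝒞)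
    (hx : x ∈ intrinsicInterior ℝ H) (hxE : x ∈ E) : H ⊆ E := by
  obtain ⟨𝒮, h𝒮, hHE⟩ := h.inter H hH E hE
  obtain ⟨G, hG, hxG⟩ : x ∈ ⋃₀ 𝒮 := hHE ▸ ⟨intrinsicInterior_subset hx, hxE⟩
  obtain ⟨H', hH', hH'G, hxH'⟩ := h.exists_mem_intrinsicInterior (h𝒮 hG) hxG
  obtain rfl : H' = H := by_contra fun hne =>
    (h.relint_disjoint H' hH' H hH hne).subset ⟨hxH', hx⟩
  exact hH'G.trans ((hHE ▸ subset_sUnion_of_mem hG).trans inter_subset_right)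

theorem exists_isFaceOf_superset (h : IsCellStructure U 𝒞) (hE : E ∈ 𝒞) (hEne : E.Nonempty)
    (hD : D ∈ 𝒞) (hED : E ⊆ D) (hlt : pdim E < pdim D) :
    ∃ D' ∈ 𝒞, D' ⊆ D ∧ pdim E < pdim D' ∧ ∃ F, IsFaceOf F D' ∧ E ⊆ F ∧ pdim F = pdim E := by
  induction hn : pdim D using Nat.strong_induction_on generalizing D with
  | _ n ih =>
  obtain ⟨z, hz⟩ := hEne.intrinsicInterior (h.polytope E hE).convex
  have hzE := intrinsicInterior_subset hz
  have hzD : z ∉ intrinsicInterior ℝ D := fun hzD =>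
    (pdim_mono (h.subset_of_mem_intrinsicInterior hD hE hzD hzE)).not_gt hlt
  obtain ⟨g, hg, w, hw, hwz⟩ :=
    (h.polytope D hD).convex.exists_supporting_functional (hED hzE) hzD
  set F₁ := D ∩ {y | g y = g z}
  have hF₁ : IsFaceOf F₁ D := ⟨g, g z, by rintro rfl; simp at hwz, hg, rfl⟩
  have hEF₁ : E ⊆ F₁ := fun y hy =>
    ⟨hED hy, g.eq_of_le_of_mem_intrinsicInterior (fun y hy => hg y (hED hy)) hz rfl y hy⟩
  rcases (pdim_mono hEF₁).eq_or_lt with heq | hEF₁lt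
  · exact ⟨D, hD, subset_rfl, hlt, F₁, hF₁, hEF₁, heq.symm⟩
  -- `F₁` is bigger than `E`, so one of its cells through `z` leaves the span of `E`;
  -- that cell contains `E` and has smaller dimension than `D`
  obtain ⟨y, hyF₁, hyE⟩ : ∃ y ∈ F₁, y ∉ affineSpan ℝ E :=
    not_subset.1 fun hsub => (pdim_le_of_subset_affineSpan hsub).not_gt hEF₁lt
  obtain ⟨𝒮, h𝒮, hF₁𝒮⟩ := h.faces D hD F₁ hF₁
  have hF₁conv : Convex ℝ F₁ :=
    (h.polytope D hD).convex.inter (convex_hyperplane g.isLinear (g z))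
  obtain ⟨K, hK, hzK, hKE⟩ := hF₁conv.exists_mem_sUnion_not_subset_affineSubspace hF₁𝒮
    (h.finite.subset h𝒮) (fun K hK => (h.polytope K (h𝒮 hK)).isClosed) (hEF₁ hzE)
    (subset_affineSpan ℝ E hzE) hyF₁ hyE
  obtain ⟨v, hvK, hvE⟩ := not_subset.1 hKE
  have hKF₁ : K ⊆ F₁ := hF₁𝒮 ▸ subset_sUnion_of_mem hK
  have hEK := h.subset_of_mem_intrinsicInterior hE (h𝒮 hK) hz hzK
  obtain ⟨D', hD', hD'K, hlt', hface⟩ := ih _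
    (hn ▸ (pdim_mono hKF₁).trans_lt (pdim_inter_hyperplane_lt (hED hzE) hw hwz.ne)) (h𝒮 hK)
    hEK (pdim_lt_of_notMem_affineSpan hEK hEne hvK hvE) rfl
  exact ⟨D', hD', hD'K.trans (hKF₁.trans inter_subset_left), hlt', hface⟩

end IsCellStructure

section Subdivision

variable {d n : ℕ} {U Ω C E H : Set (Fin d → ℝ)} {𝒞 : Set (Set (Fin d → ℝ))}
  {f : (Fin d → ℝ) →ₗ[ℝ] ℝ} {c : ℝ} {x : Fin d → ℝ}

/-- For a convex `E`, this says that `E ⊆ Ω` and `E \ {f = c}` is disconnected. -/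
def IsCut (Ω : Set (Fin d → ℝ)) (f : (Fin d → ℝ) →ₗ[ℝ] ℝ) (c : ℝ) (E : Set (Fin d → ℝ)) : Prop :=
  E ⊆ Ω ∧ (E ∩ {x | f x < c}).Nonempty ∧ (E ∩ {x | c < f x}).Nonempty

def cutCells (𝒞 : Set (Set (Fin d → ℝ))) (Ω : Set (Fin d → ℝ)) (f : (Fin d → ℝ) →ₗ[ℝ] ℝ)
    (c : ℝ) : Set (Set (Fin d → ℝ)) :=
  {E ∈ 𝒞 | ¬ IsCut Ω f c E} ∪
    ⋃ E ∈ {E ∈ 𝒞 | IsCut Ω f c E}, {E ∩ {x | f x = c}, E ∩ {x | f x ≤ c}, E ∩ {x | c ≤ f x}}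

open Classical in
/-- The cell of the subdivision of `E` whose relative interior contains `x`, when
`x ∈ intrinsicInterior ℝ E`. -/
noncomputable def subcellAt (Ω : Set (Fin d → ℝ)) (f : (Fin d → ℝ) →ₗ[ℝ] ℝ) (c : ℝ)
    (E : Set (Fin d → ℝ)) (x : Fin d → ℝ) : Set (Fin d → ℝ) :=
  if IsCut Ω f c E then
    if f x < c then E ∩ {y | f y ≤ c}
    else if c < f x then E ∩ {y | c ≤ f y}
    else E ∩ {y | f y = c}
  else E

theorem mem_cutCells_iff : C ∈ cutCells 𝒞 Ω f c ↔ (C ∈ 𝒞 ∧ ¬ IsCut Ω f c C) ∨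
    ∃ E ∈ 𝒞, IsCut Ω f c E ∧
      (C = E ∩ {x | f x = c} ∨ C = E ∩ {x | f x ≤ c} ∨ C = E ∩ {x | c ≤ f x}) := by
  simp [cutCells, and_assoc]

theorem isCut_neg : IsCut Ω (-f) (-c) E ↔ IsCut Ω f c E := by
  simp only [IsCut, LinearMap.neg_apply, neg_lt_neg_iff]
  tauto

theorem cutCells_neg : cutCells 𝒞 Ω (-f) (-c) = cutCells 𝒞 Ω f c := by
  ext C
  simp [mem_cutCells_iff, isCut_neg, or_comm]

theorem subcellAt_neg : subcellAt Ω (-f) (-c) E x = subcellAt Ω f c E x := by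
  by_cases hcut : IsCut Ω f c E
  · simp only [subcellAt, if_pos hcut, if_pos (isCut_neg.2 hcut), LinearMap.neg_apply,
      neg_lt_neg_iff, neg_le_neg_iff, neg_inj]
    split_ifs <;> first | rfl | (exfalso; linarith)
  · simp only [subcellAt, if_neg hcut, if_neg (mt isCut_neg.1 hcut)]

theorem inter_eq_mem_cutCells (hE : E ∈ 𝒞) (hcut : IsCut Ω f c E) :
    E ∩ {x | f x = c} ∈ cutCells 𝒞 Ω f c :=
  mem_cutCells_iff.2 (Or.inr ⟨E, hE, hcut, Or.inl rfl⟩)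

theorem inter_le_mem_cutCells (hE : E ∈ 𝒞) (hcut : IsCut Ω f c E) :
    E ∩ {x | f x ≤ c} ∈ cutCells 𝒞 Ω f c :=
  mem_cutCells_iff.2 (Or.inr ⟨E, hE, hcut, Or.inr (Or.inl rfl)⟩)

theorem inter_ge_mem_cutCells (hE : E ∈ 𝒞) (hcut : IsCut Ω f c E) :
    E ∩ {x | c ≤ f x} ∈ cutCells 𝒞 Ω f c :=
  mem_cutCells_iff.2 (Or.inr ⟨E, hE, hcut, Or.inr (Or.inr rfl)⟩)

theorem subset_le_or_subset_ge_of_not_isCut (hC : ¬ IsCut Ω f c C) (hCΩ : C ⊆ Ω) :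
    C ⊆ {x | f x ≤ c} ∨ C ⊆ {x | c ≤ f x} := by
  by_contra! hsub
  obtain ⟨⟨q, hq, hqc⟩, ⟨p, hp, hpc⟩⟩ := And.imp not_subset.1 not_subset.1 hsub
  exact hC ⟨hCΩ, ⟨p, hp, show f p < c from lt_of_not_ge hpc⟩,
    ⟨q, hq, show c < f q from lt_of_not_ge hqc⟩⟩

namespace IsCut

theorem pdim_inter_le (hcut : IsCut Ω f c E) (hE : Convex ℝ E) :
    pdim (E ∩ {x | f x ≤ c}) = pdim E := by
  obtain ⟨-, ⟨p, hp, hpc⟩, -⟩ := hcut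
  rw [pdim, pdim, hE.affineSpan_inter_le_eq hp hpc]

theorem pdim_inter_ge (hcut : IsCut Ω f c E) (hE : Convex ℝ E) :
    pdim (E ∩ {x | c ≤ f x}) = pdim E := by
  simpa using (isCut_neg.2 hcut).pdim_inter_le hE

theorem pdim_inter_eq_lt (hcut : IsCut Ω f c E) (hE : Convex ℝ E) :
    pdim (E ∩ {x | f x = c}) < pdim E := by
  obtain ⟨-, ⟨p, hp, hpc : f p < c⟩, ⟨q, hq, hqc : c < f q⟩⟩ := hcut
  obtain ⟨t, ht, htc⟩ := f.exists_apply_lineMap_eq hpc hqc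
  have := pdim_inter_hyperplane_lt (hE.lineMap_mem hp hq (Ioo_subset_Icc_self ht)) hq
    (htc ▸ hqc.ne')
  rwa [htc] at this

end IsCut

theorem subcellAt_subset : subcellAt Ω f c E x ⊆ E := by
  unfold subcellAt
  split_ifs <;> first | exact inter_subset_left | exact subset_rfl

theorem subcellAt_mem_cutCells (hE : E ∈ 𝒞) : subcellAt Ω f c E x ∈ cutCells 𝒞 Ω f c := by
  unfold subcellAt
  split_ifs with hcut
  · exact inter_le_mem_cutCells hE hcut
  · exact inter_ge_mem_cutCells hE hcut
  · exact inter_eq_mem_cutCells hE hcut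
  · exact mem_cutCells_iff.2 (Or.inl ⟨hE, hcut⟩)

theorem mem_intrinsicInterior_subcellAt (hx : x ∈ intrinsicInterior ℝ E) :
    x ∈ intrinsicInterior ℝ (subcellAt Ω f c E x) := by
  unfold subcellAt
  split_ifs with hcut hlt hgt
  · exact mem_intrinsicInterior_inter_le hx hlt
  · simpa using mem_intrinsicInterior_inter_le (f := -f) (c := -c) hx (by simpa using hgt)
  · have hxc : f x = c := le_antisymm (not_lt.1 hgt) (not_lt.1 hlt)
    exact hxc ▸ mem_intrinsicInterior_inter_hyperplane hx
  · exact hx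

theorem subcellAt_subset_setOf_le (hEΩ : E ⊆ Ω) (hx : x ∈ intrinsicInterior ℝ E)
    (hxc : f x ≤ c) : subcellAt Ω f c E x ⊆ {y | f y ≤ c} := by
  unfold subcellAt
  split_ifs with hcut hlt hgt
  · exact inter_subset_right
  · exact absurd hxc (not_le.2 hgt)
  · exact fun y hy => hy.2.le
  · rcases subset_le_or_subset_ge_of_not_isCut hcut hEΩ with hle | hge
    · exact hle
    -- `f ≥ c` on `E` attains the value `c` at the relative interior point `x`, so `f = c` on `E`
    · have hconst := (-f).eq_of_le_of_mem_intrinsicInterior (b := -c)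
        (fun y hy => by simpa using hge hy) hx
        (by simpa using le_antisymm hxc (hge (intrinsicInterior_subset hx)))
      exact fun y hy => by simpa using (hconst y hy).ge

theorem subcellAt_subset_setOf_ge (hEΩ : E ⊆ Ω) (hx : x ∈ intrinsicInterior ℝ E)
    (hxc : c ≤ f x) : subcellAt Ω f c E x ⊆ {y | c ≤ f y} := by
  simpa [subcellAt_neg] using
    subcellAt_subset_setOf_le (f := -f) (c := -c) hEΩ hx (by simpa using hxc)

namespace IsCellStructure

theorem exists_eq_subcellAt (h : IsCellStructure U 𝒞) (hC : C ∈ cutCells 𝒞 Ω f c)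
    (hx : x ∈ intrinsicInterior ℝ C) :
    ∃ E ∈ 𝒞, x ∈ intrinsicInterior ℝ E ∧ C = subcellAt Ω f c E x := by
  rcases mem_cutCells_iff.1 hC with ⟨hC𝒞, hnc⟩ | ⟨E, hE, hcut, hCE⟩
  · exact ⟨C, hC𝒞, hx, (if_neg hnc).symm⟩
  have hconv := (h.polytope E hE).convex
  obtain ⟨p, hp, hpc : f p < c⟩ := hcut.2.1
  obtain ⟨q, hq, hqc : c < f q⟩ := hcut.2.2
  rcases hCE with rfl | rfl | rfl
  · have hxc : f x = c := (intrinsicInterior_subset hx).2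
    exact ⟨E, hE, hconv.intrinsicInterior_inter_hyperplane_subset hp hpc hq hqc hx,
      by simp [subcellAt, hcut, hxc]⟩
  · obtain ⟨hxE, hxc : f x < c⟩ := hconv.intrinsicInterior_inter_le_subset hp hpc hq hqc hx
    exact ⟨E, hE, hxE, by simp [subcellAt, hcut, hxc]⟩
  · obtain ⟨hxE, hxc⟩ := hconv.intrinsicInterior_inter_le_subset (f := -f) (c := -c) hq
      (by simpa using hqc) hp (by simpa using hpc) (by simpa using hx)
    have hxc : c < f x := by simpa using hxc
    exact ⟨E, hE, hxE, by simp [subcellAt, hcut, hxc, hxc.not_gt]⟩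

theorem subcellAt_subset_of_mem (h : IsCellStructure U 𝒞) (hH : H ∈ 𝒞)
    (hx : x ∈ intrinsicInterior ℝ H) (hC : C ∈ cutCells 𝒞 Ω f c) (hxC : x ∈ C) :
    subcellAt Ω f c H x ⊆ C := by
  rcases mem_cutCells_iff.1 hC with ⟨hC𝒞, -⟩ | ⟨E, hE, hcut, hCE⟩
  · exact subcellAt_subset.trans (h.subset_of_mem_intrinsicInterior hH hC𝒞 hx hxC)
  have hxE : x ∈ E := by rcases hCE with rfl | rfl | rfl <;> exact hxC.1
  have hHE := h.subset_of_mem_intrinsicInterior hH hE hx hxE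
  have hHΩ := hHE.trans hcut.1
  rcases hCE with rfl | rfl | rfl
  · exact subset_inter (subcellAt_subset.trans hHE) fun y hy =>
      le_antisymm (subcellAt_subset_setOf_le hHΩ hx hxC.2.le hy)
        (subcellAt_subset_setOf_ge hHΩ hx hxC.2.ge hy)
  · exact subset_inter (subcellAt_subset.trans hHE) (subcellAt_subset_setOf_le hHΩ hx hxC.2)
  · exact subset_inter (subcellAt_subset.trans hHE) (subcellAt_subset_setOf_ge hHΩ hx hxC.2)

theorem exists_minimal_cutCell (h : IsCellStructure U 𝒞) (hx : x ∈ U) :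
    ∃ K ∈ cutCells 𝒞 Ω f c, x ∈ intrinsicInterior ℝ K ∧
      ∀ C ∈ cutCells 𝒞 Ω f c, x ∈ C → K ⊆ C := by
  obtain ⟨H, hH, hxH⟩ := h.exists_mem_intrinsicInterior_of_mem hx
  exact ⟨_, subcellAt_mem_cutCells hH, mem_intrinsicInterior_subcellAt hxH,
    fun C hC hxC => h.subcellAt_subset_of_mem hH hxH hC hxC⟩

theorem subset_of_mem_cutCells (h : IsCellStructure U 𝒞) (hC : C ∈ cutCells 𝒞 Ω f c) :
    C ⊆ U := by
  rcases mem_cutCells_iff.1 hC with ⟨hC𝒞, -⟩ | ⟨E, hE, -, hCE⟩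
  · exact h.cover ▸ subset_sUnion_of_mem hC𝒞
  · rcases hCE with rfl | rfl | rfl <;>
      exact inter_subset_left.trans (h.cover ▸ subset_sUnion_of_mem hE)

theorem isCellStructure_cutCells (h : IsCellStructure U 𝒞) :
    IsCellStructure U (cutCells 𝒞 Ω f c) := by
  refine ⟨?_, fun C hC => ?_, ?_, fun C hC D hD => ?_, fun C hC D hD hCD => ?_,
    fun C hC F hF => ?_⟩
  · exact (h.finite.subset (sep_subset _ _)).union
      ((h.finite.subset (sep_subset _ _)).biUnion fun _ _ => toFinite _)
  · rcases mem_cutCells_iff.1 hC with ⟨hC𝒞, -⟩ | ⟨E, hE, -, rfl | rfl | rfl⟩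
    · exact h.polytope C hC𝒞
    · exact (h.polytope E hE).inter (isPolytope_setOf_eq f c)
    · exact (h.polytope E hE).inter (isPolytope_setOf_le f c)
    · exact (h.polytope E hE).inter (by simpa using isPolytope_setOf_le (-f) (-c))
  · refine (sUnion_subset fun C hC => h.subset_of_mem_cutCells hC).antisymm fun x hx => ?_
    obtain ⟨K, hK, hxK, -⟩ := h.exists_minimal_cutCell (Ω := Ω) (f := f) (c := c) hx
    exact ⟨K, hK, intrinsicInterior_subset hxK⟩
  · refine ⟨{K ∈ cutCells 𝒞 Ω f c | K ⊆ C ∩ D}, sep_subset _ _,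
      Subset.antisymm (fun x hx => ?_) (sUnion_subset fun K hK => hK.2)⟩
    obtain ⟨K, hK, hxK, hKmin⟩ := h.exists_minimal_cutCell (h.subset_of_mem_cutCells hC hx.1)
    exact ⟨K, ⟨hK, subset_inter (hKmin C hC hx.1) (hKmin D hD hx.2)⟩,
      intrinsicInterior_subset hxK⟩
  · refine eq_empty_iff_forall_notMem.2 fun x ⟨hxC, hxD⟩ => hCD ?_
    obtain ⟨E₁, hE₁, hxE₁, rfl⟩ := h.exists_eq_subcellAt hC hxC
    obtain ⟨E₂, hE₂, hxE₂, rfl⟩ := h.exists_eq_subcellAt hD hxD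
    obtain rfl : E₁ = E₂ := by_contra fun hne =>
      (h.relint_disjoint E₁ hE₁ E₂ hE₂ hne).subset ⟨hxE₁, hxE₂⟩
    rfl
  · obtain ⟨g, b, -, hg, rfl⟩ := hF
    refine ⟨{K ∈ cutCells 𝒞 Ω f c | K ⊆ C ∩ {x | g x = b}}, sep_subset _ _,
      Subset.antisymm (fun x hx => ?_) (sUnion_subset fun K hK => hK.2)⟩
    obtain ⟨K, hK, hxK, hKmin⟩ := h.exists_minimal_cutCell (h.subset_of_mem_cutCells hC hx.1)
    have hKC := hKmin C hC hx.1
    refine ⟨K, ⟨hK, subset_inter hKC fun y hy => ?_⟩, intrinsicInterior_subset hxK⟩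
    exact g.eq_of_le_of_mem_intrinsicInterior (fun z hz => hg z (hKC hz)) hxK hx.2 y hy

end IsCellStructure

theorem sInter_facesThrough_cutCells_subset (hgood : IsGoodCellStructure n U 𝒞)
    {C₀ : Set (Fin d → ℝ)} (hC₀ : C₀ ∈ 𝒞) (hC₀n : pdim C₀ < n) (hCC₀ : C ⊆ C₀)
    (hdim : pdim C = pdim C₀) (hnc : ¬ IsCut Ω f c C) :
    ⋂₀ facesThrough (cutCells 𝒞 Ω f c) C ⊆ C₀ := by
  rw [hgood.2.2 C₀ hC₀ hC₀n]
  refine fun x hx => mem_sInter.2 fun F ⟨E, hE, hlt, hF, hFdim, hC₀F⟩ => ?_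
  have hCF := hCC₀.trans hC₀F
  rw [← hdim] at hlt hFdim
  by_cases hcut : IsCut Ω f c E
  · have hconv := (hgood.1.polytope E hE).convex
    rcases subset_le_or_subset_ge_of_not_isCut hnc (hCF.trans (hF.subset.trans hcut.1))
      with hle | hge
    · exact (hx _ (inter_mem_facesThrough (inter_le_mem_cutCells hE hcut)
        (hcut.pdim_inter_le hconv) hF (subset_inter hCF hle) hFdim hlt)).1
    · exact (hx _ (inter_mem_facesThrough (inter_ge_mem_cutCells hE hcut)
        (hcut.pdim_inter_ge hconv) hF (subset_inter hCF hge) hFdim hlt)).1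
  · exact hx F ⟨E, mem_cutCells_iff.2 (Or.inl ⟨hE, hcut⟩), hlt, hF, hFdim, hCF⟩

theorem sInter_facesThrough_cutCells_subset_inter_le (hgood : IsGoodCellStructure n U 𝒞)
    (hΩ : Ω ∈ 𝒞) (hΩn : pdim Ω = n) (hE : E ∈ 𝒞) (hcut : IsCut Ω f c E)
    (hn : pdim (E ∩ {x | f x ≤ c}) < n) :
    ⋂₀ facesThrough (cutCells 𝒞 Ω f c) (E ∩ {x | f x ≤ c}) ⊆ E ∩ {x | f x ≤ c} := by
  have hdim := hcut.pdim_inter_le (hgood.1.polytope E hE).convex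
  have hnc : ¬ IsCut Ω f c (E ∩ {x | f x ≤ c}) := fun ⟨_, _, ⟨y, hy, hyc⟩⟩ =>
    not_lt.2 (show f y ≤ c from hy.2) hyc
  obtain ⟨D, hD, hDΩ, hlt, F, hF, hEF, hFdim⟩ := hgood.1.exists_isFaceOf_superset hE
    (hcut.2.1.mono inter_subset_left) hΩ hcut.1 (hΩn ▸ hdim ▸ hn)
  have hED : E ⊆ D := hEF.trans hF.subset
  have hDcut : IsCut Ω f c D := ⟨hDΩ, hcut.2.1.mono (inter_subset_inter_left _ hED),
    hcut.2.2.mono (inter_subset_inter_left _ hED)⟩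
  have hFle : F ∩ {x | f x ≤ c} ∈ facesThrough (cutCells 𝒞 Ω f c) (E ∩ {x | f x ≤ c}) :=
    inter_mem_facesThrough (inter_le_mem_cutCells hD hDcut)
      (hDcut.pdim_inter_le (hgood.1.polytope D hD).convex) hF (inter_subset_inter_left _ hEF)
      (hFdim.trans hdim.symm) (hdim.symm ▸ hlt)
  exact fun x hx => ⟨sInter_facesThrough_cutCells_subset hgood hE (hdim ▸ hn) inter_subset_left
    hdim hnc hx, (hx _ hFle).2⟩

end Subdivision

theorem subdivision_good_general {d n : ℕ} (U : Set (Fin d → ℝ))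
    (𝒞 : Set (Set (Fin d → ℝ))) (h𝒞 : IsGoodCellStructure n U 𝒞)
    (Ω : Set (Fin d → ℝ)) (hΩ : Ω ∈ 𝒞) (hΩdim : pdim Ω = n)
    (f : (Fin d → ℝ) →ₗ[ℝ] ℝ) (hf : f ≠ 0) (c : ℝ) :
    IsGoodCellStructure n U
      ({E ∈ 𝒞 | ¬ (E ⊆ Ω ∧ (E ∩ {x | f x < c}).Nonempty ∧
          (E ∩ {x | c < f x}).Nonempty)} ∪
        ⋃ E ∈ {E ∈ 𝒞 | E ⊆ Ω ∧ (E ∩ {x | f x < c}).Nonempty ∧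
          (E ∩ {x | c < f x}).Nonempty},
          {E ∩ {x | f x = c}, E ∩ {x | f x ≤ c}, E ∩ {x | c ≤ f x}}) := by
  show IsGoodCellStructure n U (cutCells 𝒞 Ω f c)
  refine ⟨h𝒞.1.isCellStructure_cutCells, h𝒞.2.1,
    fun C hC hCn => subset_sInter_facesThrough.antisymm ?_⟩
  rcases mem_cutCells_iff.1 hC with ⟨hC𝒞, hnc⟩ | ⟨E, hE, hcut, rfl | rfl | rfl⟩
  · exact sInter_facesThrough_cutCells_subset h𝒞 hC𝒞 hCn subset_rfl rfl hnc
  -- the slice is a facet of the lower piece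
  · have hconv := (h𝒞.1.polytope E hE).convex
    refine sInter_subset_of_mem ⟨E ∩ {x | f x ≤ c}, inter_le_mem_cutCells hE hcut,
      (hcut.pdim_inter_le hconv).symm ▸ hcut.pdim_inter_eq_lt hconv,
      ⟨f, c, hf, fun x hx => hx.2, ?_⟩, rfl, subset_rfl⟩
    ext x
    simp +contextual [and_assoc]
  · exact sInter_facesThrough_cutCells_subset_inter_le h𝒞 hΩ hΩdim hE hcut hCn
  -- the upper piece is the lower piece for `(-f, -c)`
  · simpa [cutCells_neg] using sInter_facesThrough_cutCells_subset_inter_le (f := -f) (c := -c)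
      h𝒞 hΩ hΩdim hE (isCut_neg.2 hcut) (by simpa using hCn)

/-- Lemma (subdivision): subdividing a good cell structure by cutting a top
dimensional cell `Ω` with a hyperplane meeting its relative interior yields a
good cell structure.  A cell `E ⊆ Ω` is cut exactly when both open sides of
the hyperplane meet it; it is replaced by `E ∩ {f = c}`, `E ∩ {f ≤ c}` and
`E ∩ {f ≥ c}` (the latter two being the closures of the two components of
`E \ W`). -/
theorem subdivision_good {d n : ℕ} (U : Set (Fin d → ℝ)) (hU : IsPolytope U)
    (𝒞 : Set (Set (Fin d → ℝ))) (h𝒞 : IsGoodCellStructure n U 𝒞)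
    (Ω : Set (Fin d → ℝ)) (hΩ : Ω ∈ 𝒞) (hΩdim : pdim Ω = n)
    (f : (Fin d → ℝ) →ₗ[ℝ] ℝ) (hf : f ≠ 0) (c : ℝ)
    (hmeets : (intrinsicInterior ℝ Ω ∩ {x | f x = c}).Nonempty) :
    IsGoodCellStructure n U
      ({E ∈ 𝒞 | ¬ (E ⊆ Ω ∧ (E ∩ {x | f x < c}).Nonempty ∧
          (E ∩ {x | c < f x}).Nonempty)} ∪
        ⋃ E ∈ {E ∈ 𝒞 | E ⊆ Ω ∧ (E ∩ {x | f x < c}).Nonempty ∧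
          (E ∩ {x | c < f x}).Nonempty},
          {E ∩ {x | f x = c}, E ∩ {x | f x ≤ c}, E ∩ {x | c ≤ f x}}) :=
  subdivision_good_general U 𝒞 h𝒞 Ω hΩ hΩdim f hf c
end

section
/- Let Z be a metric space written as a finite union of closed subsets Z = Z_1 ∪ ... ∪ Z_k. If each Z_i (with the induced metric) has capacity dimension at most n, then Z has capacity dimension at most n. -/
open Set

/-- `Z` has capacity dimension at most `m`. -/
def CapacityDimLE (Z : Type*) [MetricSpace Z] (m : ℕ) : Prop :=
  ∃ C : ℝ, 0 < C ∧ ∃ s0 : ℝ, 0 < s0 ∧ ∀ s : ℝ, 0 < s → s < s0 →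
    ∃ 𝒰 : Set (Set Z), ⋃₀ 𝒰 = Set.univ ∧
      (∀ U ∈ 𝒰, EMetric.diam U < ENNReal.ofReal (C * s)) ∧
      (∀ z : Z, {U ∈ 𝒰 | ∃ u ∈ U, dist z u < s}.encard ≤ (m + 1 : ℕ∞))

/-!
Capacity dimension `≤ n` is equivalent to the existence, for all small `r`, of a cover by
`n + 1` colours, each an `r`-separated family of sets of diameter `O(r)`. Given a cover with
`s`-multiplicity `≤ n + 1`, pigeonhole gives each point `z` a level `ℓ ≤ n` at which the members
of the cover within `ℓ r` of `z` are also all those within `(ℓ + 1) r`; grouping the points of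
one level by this set of members gives the colour classes, since two points of the same level at
distance `< r` have the same set. Conversely, a `2s`-separated colour meets the
`s`-neighbourhood of a point at most once.

Coloured covers of `A` and `B` merge colour by colour: take the cover of `B` at the larger scale
`(3 + 2a) r`, where `a r` bounds the diameters of `A`'s sets, and let each of its sets absorb the
sets of `A` of the same colour that come `r`-close to it. An absorbed set grows by at most
`(1 + a) r` on each side, so the colour stays `r`-separated.
-/

open Filter Topology

namespace CapacityDim

theorem exists_pos_forall_lt_iff_eventually {p : ℝ → Prop} :
    (∃ s0 : ℝ, 0 < s0 ∧ ∀ s : ℝ, 0 < s → s < s0 → p s) ↔ ∀ᶠ s in 𝓝[>] 0, p s := by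
  simp [(nhdsGT_basis (0 : ℝ)).eventually_iff, and_imp]

theorem exists_eq_succ_of_encard_le {α : Type*} {N : ℕ → Set α} (hN : Monotone N)
    (h0 : (N 0).Nonempty) {n : ℕ} (hn : (N (n + 1)).encard ≤ n + 1) :
    ∃ i ≤ n, N i = N (i + 1) := by
  by_contra! hne
  have hfin : (N (n + 1)).Finite := finite_of_encard_le_coe hn
  have hgrow : ∀ i ≤ n + 1, (i + 1 : ℕ∞) ≤ (N i).encard := by
    intro i
    induction i with
    | zero => simpa using h0
    | succ i ih =>
      intro hi
      have hlt : (N i).encard < (N (i + 1)).encard :=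
        (hfin.subset (hN (by omega))).encard_lt_encard
          ((hN i.le_succ).ssubset_of_ne (hne i (by omega)))
      exact_mod_cast Order.add_one_le_of_lt ((ih (by omega)).trans_lt hlt)
  have := (hgrow (n + 1) le_rfl).trans hn
  norm_cast at this
  omega

section Families

variable {X Y : Type*} [MetricSpace X] [MetricSpace Y]

def IsSeparatedFamily (r : ℝ) (𝒲 : Set (Set X)) : Prop :=
  ∀ W ∈ 𝒲, ∀ W' ∈ 𝒲, W ≠ W' → ∀ w ∈ W, ∀ w' ∈ W', r ≤ dist w w'

def IsUniformlyBounded (D : ℝ) (𝒲 : Set (Set X)) : Prop :=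
  ∀ W ∈ 𝒲, ∀ x ∈ W, ∀ y ∈ W, dist x y ≤ D

theorem IsSeparatedFamily.union {r : ℝ} {𝒜 ℬ : Set (Set X)} (h𝒜 : IsSeparatedFamily r 𝒜)
    (hℬ : IsSeparatedFamily r ℬ)
    (h𝒜ℬ : ∀ A ∈ 𝒜, ∀ B ∈ ℬ, ∀ a ∈ A, ∀ b ∈ B, r ≤ dist a b) :
    IsSeparatedFamily r (𝒜 ∪ ℬ) := by
  rintro W (hW | hW) W' (hW' | hW') hne w hw w' hw'
  · exact h𝒜 W hW W' hW' hne w hw w' hw'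
  · exact h𝒜ℬ W hW W' hW' w hw w' hw'
  · exact dist_comm w w' ▸ h𝒜ℬ W' hW' W hW w' hw' w hw
  · exact hℬ W hW W' hW' hne w hw w' hw'

theorem isSeparatedFamily_range_fibers {β : Type*} {r : ℝ} {A : Set X} {f : X → β}
    (hf : ∀ x ∈ A, ∀ y ∈ A, dist x y < r → f x = f y) :
    IsSeparatedFamily r (range fun b => {x ∈ A | f x = b}) := by
  rintro _ ⟨b, rfl⟩ _ ⟨b', rfl⟩ hne w ⟨hwA, rfl⟩ w' ⟨hw'A, rfl⟩
  by_contra! hlt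
  exact hne (by rw [hf w hwA w' hw'A hlt])

theorem IsSeparatedFamily.subsingleton {s : ℝ} {𝒲 : Set (Set X)}
    (h : IsSeparatedFamily (2 * s) 𝒲) (z : X) :
    {U ∈ 𝒲 | ∃ u ∈ U, dist z u < s}.Subsingleton := by
  rintro U ⟨hU, u, hu, hzu⟩ U' ⟨hU', u', hu', hzu'⟩
  by_contra hne
  have := h U hU U' hU' hne u hu u' hu'
  linarith [dist_triangle_left u u' z]

theorem IsSeparatedFamily.image {r : ℝ} {𝒲 : Set (Set X)} (h : IsSeparatedFamily r 𝒲)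
    {f : X → Y} (hf : Isometry f) : IsSeparatedFamily r (Set.image f '' 𝒲) := by
  rintro _ ⟨W, hW, rfl⟩ _ ⟨W', hW', rfl⟩ hne _ ⟨w, hw, rfl⟩ _ ⟨w', hw', rfl⟩
  rw [hf.dist_eq]
  exact h W hW W' hW' (fun h => hne (h ▸ rfl)) w hw w' hw'

theorem IsUniformlyBounded.image {D : ℝ} {𝒲 : Set (Set X)} (h : IsUniformlyBounded D 𝒲)
    {f : X → Y} (hf : Isometry f) : IsUniformlyBounded D (Set.image f '' 𝒲) := by
  rintro _ ⟨W, hW, rfl⟩ _ ⟨x, hx, rfl⟩ _ ⟨y, hy, rfl⟩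
  rw [hf.dist_eq]
  exact h W hW x hx y hy

theorem isUniformlyBounded_of_ediam_lt {D : ℝ} {𝒲 : Set (Set X)}
    (h : ∀ W ∈ 𝒲, Metric.ediam W < ENNReal.ofReal D) : IsUniformlyBounded D 𝒲 :=
  fun W hW _ hx _ hy =>
    (edist_lt_ofReal.1 ((Metric.edist_le_ediam_of_mem hx hy).trans_lt (h W hW))).le

theorem IsUniformlyBounded.ediam_lt {D D' : ℝ} {𝒲 : Set (Set X)} (h : IsUniformlyBounded D 𝒲)
    (hD : 0 ≤ D) (hDD' : D < D') : ∀ W ∈ 𝒲, Metric.ediam W < ENNReal.ofReal D' := fun W hW =>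
  (Metric.ediam_le fun x hx y hy => (edist_le_ofReal hD).2 (h W hW x hx y hy)).trans_lt
    ((ENNReal.ofReal_lt_ofReal_iff (hD.trans_lt hDD')).2 hDD')

end Families

section Merge

variable {X : Type*} [MetricSpace X]

def IsNear (r : ℝ) (U V : Set X) : Prop := ∃ u ∈ U, ∃ v ∈ V, dist u v < r

def absorb (r : ℝ) (𝒜 : Set (Set X)) (V : Set X) : Set X :=
  V ∪ ⋃₀ {U ∈ 𝒜 | IsNear r U V}

variable {r a b : ℝ} {𝒜 ℬ : Set (Set X)}

theorem exists_dist_le_of_mem_absorb (hr : 0 ≤ r) (ha : 0 ≤ a) (h𝒜 : IsUniformlyBounded a 𝒜)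
    {V : Set X} {w : X} (hw : w ∈ absorb r 𝒜 V) : ∃ v ∈ V, dist w v ≤ r + a := by
  rcases hw with hw | ⟨U, ⟨hU, u, hu, v, hv, huv⟩, hwU⟩
  · exact ⟨w, hw, by rw [dist_self]; positivity⟩
  · exact ⟨v, hv, by linarith [h𝒜 U hU w hwU u hu, dist_triangle w u v]⟩

theorem isSeparatedFamily_image_absorb (hr : 0 ≤ r) (ha : 0 ≤ a)
    (h𝒜 : IsUniformlyBounded a 𝒜) (hℬ : IsSeparatedFamily (3 * r + 2 * a) ℬ) :
    IsSeparatedFamily r (absorb r 𝒜 '' ℬ) := by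
  rintro _ ⟨V, hV, rfl⟩ _ ⟨V', hV', rfl⟩ hne w hw w' hw'
  obtain ⟨v, hv, hwv⟩ := exists_dist_le_of_mem_absorb hr ha h𝒜 hw
  obtain ⟨v', hv', hwv'⟩ := exists_dist_le_of_mem_absorb hr ha h𝒜 hw'
  have := hℬ V hV V' hV' (fun h => hne (h ▸ rfl)) v hv v' hv'
  linarith [dist_triangle4 v w w' v', dist_comm v w]

theorem isUniformlyBounded_image_absorb (hr : 0 ≤ r) (ha : 0 ≤ a)
    (h𝒜 : IsUniformlyBounded a 𝒜) (hℬ : IsUniformlyBounded b ℬ) :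
    IsUniformlyBounded (b + 2 * (r + a)) (absorb r 𝒜 '' ℬ) := by
  rintro _ ⟨V, hV, rfl⟩ x hx y hy
  obtain ⟨v, hv, hxv⟩ := exists_dist_le_of_mem_absorb hr ha h𝒜 hx
  obtain ⟨v', hv', hyv'⟩ := exists_dist_le_of_mem_absorb hr ha h𝒜 hy
  linarith [dist_triangle4 x v v' y, hℬ V hV v hv v' hv', dist_comm v' y]

theorem exists_merge (hr : 0 ≤ r) (ha : 0 ≤ a) (hb : 0 ≤ b)
    (h𝒜 : IsSeparatedFamily r 𝒜) (h𝒜a : IsUniformlyBounded a 𝒜)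
    (hℬ : IsSeparatedFamily (3 * r + 2 * a) ℬ) (hℬb : IsUniformlyBounded b ℬ) :
    ∃ 𝒲 : Set (Set X), IsSeparatedFamily r 𝒲 ∧ IsUniformlyBounded (b + 2 * (r + a)) 𝒲 ∧
      ⋃₀ 𝒲 = ⋃₀ 𝒜 ∪ ⋃₀ ℬ := by
  set 𝒦 := {U ∈ 𝒜 | ∀ V ∈ ℬ, ¬ IsNear r U V}
  refine ⟨absorb r 𝒜 '' ℬ ∪ 𝒦, ?_, ?_, ?_⟩
  · refine (isSeparatedFamily_image_absorb hr ha h𝒜a hℬ).union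
      (fun U hU U' hU' hne => h𝒜 U hU.1 U' hU'.1 hne) ?_
    rintro _ ⟨V, hV, rfl⟩ K ⟨hK, hKfar⟩ w hw k hk
    rcases hw with hwV | ⟨U, ⟨hU, hUV⟩, hwU⟩
    · by_contra! hlt
      exact hKfar V hV ⟨k, hk, w, hwV, dist_comm w k ▸ hlt⟩
    · exact h𝒜 U hU K hK (by rintro rfl; exact hKfar V hV hUV) w hwU k hk
  · rintro W (hW | ⟨hW, -⟩)
    · exact isUniformlyBounded_image_absorb hr ha h𝒜a hℬb W hW
    · intro x hx y hy
      linarith [h𝒜a W hW x hx y hy]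
  · apply Subset.antisymm
    · rintro z ⟨_, ⟨V, hV, rfl⟩ | ⟨hU, -⟩, hz⟩
      · rcases hz with hz | ⟨U, ⟨hU, -⟩, hz⟩
        exacts [Or.inr ⟨V, hV, hz⟩, Or.inl ⟨U, hU, hz⟩]
      · exact Or.inl ⟨_, hU, hz⟩
    · rintro z (⟨U, hU, hz⟩ | ⟨V, hV, hz⟩)
      · by_cases hnear : ∃ V ∈ ℬ, IsNear r U V
        · obtain ⟨V, hV, hUV⟩ := hnear
          exact ⟨_, Or.inl ⟨V, hV, rfl⟩, Or.inr ⟨U, ⟨hU, hUV⟩, hz⟩⟩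
        · push Not at hnear
          exact ⟨U, Or.inr ⟨hU, hnear⟩, hz⟩
      · exact ⟨_, Or.inl ⟨V, hV, rfl⟩, Or.inl hz⟩

end Merge

section Colored

variable {X Y : Type*} [MetricSpace X] [MetricSpace Y]

def ColoredDimLE (S : Set X) (n : ℕ) : Prop :=
  ∃ c : ℝ, 0 < c ∧ ∀ᶠ r in 𝓝[>] 0, ∃ 𝒲 : Fin (n + 1) → Set (Set X),
    (∀ i, IsSeparatedFamily r (𝒲 i) ∧ IsUniformlyBounded (c * r) (𝒲 i)) ∧ ⋃ i, ⋃₀ 𝒲 i = S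

variable {n : ℕ}

theorem coloredDimLE_empty : ColoredDimLE (∅ : Set X) n :=
  ⟨1, one_pos, .of_forall fun _ =>
    ⟨fun _ => ∅, fun _ => ⟨by simp [IsSeparatedFamily], by simp [IsUniformlyBounded]⟩, by simp⟩⟩

theorem ColoredDimLE.union {A B : Set X} (hA : ColoredDimLE A n) (hB : ColoredDimLE B n) :
    ColoredDimLE (A ∪ B) n := by
  obtain ⟨a, ha, hA⟩ := hA
  obtain ⟨b, hb, hB⟩ := hB
  refine ⟨b * (3 + 2 * a) + 2 * (1 + a), by positivity, ?_⟩
  filter_upwards [hA, eventually_nhdsGT_zero_mul_left (by positivity : (0 : ℝ) < 3 + 2 * a) hB,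
    self_mem_nhdsWithin] with r ⟨𝒜, h𝒜, h𝒜A⟩ ⟨ℬ, hℬ, hℬB⟩ (hr : 0 < r)
  choose 𝒲 h𝒲sep h𝒲bdd h𝒲U using fun i => exists_merge hr.le (by positivity) (by positivity)
    (h𝒜 i).1 (h𝒜 i).2 (by convert (hℬ i).1 using 1; ring) (hℬ i).2
  refine ⟨𝒲, fun i => ⟨h𝒲sep i, by convert h𝒲bdd i using 1; ring⟩, ?_⟩
  simp only [h𝒲U, iUnion_union_distrib, h𝒜A, hℬB]

theorem ColoredDimLE.biUnion {ι : Type*} (s : Finset ι) {A : ι → Set X}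
    (h : ∀ i ∈ s, ColoredDimLE (A i) n) : ColoredDimLE (⋃ i ∈ s, A i) n := by
  classical
  induction s using Finset.induction_on with
  | empty => simpa using coloredDimLE_empty
  | insert i s _ ih =>
    rw [Finset.set_biUnion_insert]
    exact (h i (s.mem_insert_self i)).union (ih fun j hj => h j (Finset.mem_insert_of_mem hj))

theorem ColoredDimLE.iUnion {ι : Type*} [Fintype ι] {A : ι → Set X}
    (h : ∀ i, ColoredDimLE (A i) n) : ColoredDimLE (⋃ i, A i) n := by
  simpa using ColoredDimLE.biUnion Finset.univ fun i _ => h i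

theorem ColoredDimLE.image {S : Set X} (h : ColoredDimLE S n) {f : X → Y} (hf : Isometry f) :
    ColoredDimLE (f '' S) n := by
  obtain ⟨c, hc, h⟩ := h
  refine ⟨c, hc, h.mono ?_⟩
  rintro r ⟨𝒲, h𝒲, rfl⟩
  refine ⟨fun i => Set.image f '' 𝒲 i, fun i => ⟨(h𝒲 i).1.image hf, (h𝒲 i).2.image hf⟩, ?_⟩
  simp only [image_iUnion, biUnion_image, sUnion_eq_biUnion]

end Colored

section Capacity

variable {X : Type*} [MetricSpace X] {n : ℕ}

def nearSets (𝒰 : Set (Set X)) (z : X) (t : ℝ) : Set (Set X) :=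
  {U ∈ 𝒰 | ∃ u ∈ U, dist z u ≤ t}

theorem nearSets_mono (𝒰 : Set (Set X)) (z : X) : Monotone (nearSets 𝒰 z) :=
  fun _ _ hts _ ⟨hU, u, hu, hzu⟩ => ⟨hU, u, hu, hzu.trans hts⟩

theorem nearSets_subset_of_dist_le {𝒰 : Set (Set X)} {z z' : X} {t ρ : ℝ} (h : dist z z' ≤ ρ) :
    nearSets 𝒰 z t ⊆ nearSets 𝒰 z' (t + ρ) :=
  fun _ ⟨hU, u, hu, hzu⟩ => ⟨hU, u, hu, by linarith [dist_triangle_left z' u z]⟩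

theorem exists_separated_colors_of_multiplicity_le {𝒰 : Set (Set X)} (hcov : ⋃₀ 𝒰 = univ)
    {D r s : ℝ} (hr : 0 ≤ r) (hrs : (n + 1) * r < s) (hD : IsUniformlyBounded D 𝒰)
    (hmult : ∀ z, {U ∈ 𝒰 | ∃ u ∈ U, dist z u < s}.encard ≤ n + 1) :
    ∃ 𝒲 : Fin (n + 1) → Set (Set X),
      (∀ i, IsSeparatedFamily r (𝒲 i) ∧ IsUniformlyBounded (D + n * r) (𝒲 i)) ∧
        ⋃ i, ⋃₀ 𝒲 i = univ := by
  set N : X → ℕ → Set (Set X) := fun z i => nearSets 𝒰 z (i * r)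
  have hN : ∀ z, Monotone (N z) := fun z i j hij =>
    nearSets_mono 𝒰 z (by gcongr)
  have hmem : ∀ z, ∀ U ∈ 𝒰, z ∈ U → ∀ i, U ∈ N z i := fun z U hU hz i =>
    ⟨hU, z, hz, by rw [dist_self]; positivity⟩
  have hcover : ∀ z : X, ∃ U ∈ 𝒰, z ∈ U := fun z => by
    simpa only [← mem_sUnion] using hcov ▸ mem_univ z
  have hex : ∀ z, ∃ i ≤ n, N z i = N z (i + 1) := fun z => by
    obtain ⟨U, hU, hz⟩ := hcover z
    refine exists_eq_succ_of_encard_le (hN z) ⟨U, hmem z U hU hz 0⟩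
      ((encard_mono ?_).trans (hmult z))
    rintro V ⟨hV, v, hv, hzv⟩
    exact ⟨hV, v, hv, by push_cast at hzv; linarith⟩
  choose ℓ hℓn hℓ using hex
  refine ⟨fun i => range fun 𝒮 => {z ∈ {z | ℓ z = i} | N z (ℓ z + 1) = 𝒮},
    fun i => ⟨?_, ?_⟩, ?_⟩
  · have key : ∀ x y, ℓ x = ℓ y → dist x y < r → N x (ℓ x + 1) ⊆ N y (ℓ y + 1) :=
      fun x y hxy hd => by
        rw [← hℓ x, ← hxy]
        exact (nearSets_subset_of_dist_le hd.le).trans (nearSets_mono _ _ (by push_cast; linarith))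
    refine isSeparatedFamily_range_fibers fun z hz z' hz' hzz' => ?_
    exact (key z z' (hz.trans hz'.symm) hzz').antisymm
      (key z' z (hz'.trans hz.symm) (dist_comm z z' ▸ hzz'))
  · rintro _ ⟨𝒮, rfl⟩ x ⟨-, hx⟩ y ⟨-, hy⟩
    obtain ⟨U, hU, hxU⟩ := hcover x
    have hUy : U ∈ N y (ℓ y) := by rw [hℓ y, hy, ← hx]; exact hmem x U hU hxU _
    obtain ⟨-, u, hu, hyu⟩ := hUy
    have : (ℓ y : ℝ) * r ≤ n * r := by gcongr; exact_mod_cast hℓn y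
    linarith [hD U hU x hxU u hu, dist_triangle_right x y u]
  · exact eq_univ_of_forall fun z =>
      mem_iUnion.2 ⟨⟨ℓ z, by have := hℓn z; omega⟩, _, ⟨_, rfl⟩, rfl, rfl⟩

theorem coloredDimLE_univ_of_capacityDimLE (h : CapacityDimLE X n) :
    ColoredDimLE (univ : Set X) n := by
  obtain ⟨C, hC, h⟩ := h
  rw [exists_pos_forall_lt_iff_eventually] at h
  refine ⟨C * (n + 2) + n, by positivity, ?_⟩
  filter_upwards [eventually_nhdsGT_zero_mul_left (by positivity : (0 : ℝ) < n + 2) h,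
    self_mem_nhdsWithin] with r ⟨𝒰, hcov, hdiam, hmult⟩ (hr : 0 < r)
  obtain ⟨𝒲, h𝒲, hU⟩ := exists_separated_colors_of_multiplicity_le hcov hr.le (by nlinarith)
    (isUniformlyBounded_of_ediam_lt hdiam) hmult
  exact ⟨𝒲, fun i => ⟨(h𝒲 i).1, by convert (h𝒲 i).2 using 1; ring⟩, hU⟩

theorem capacityDimLE_of_coloredDimLE (h : ColoredDimLE (univ : Set X) n) :
    CapacityDimLE X n := by
  obtain ⟨c, hc, h⟩ := h
  refine ⟨2 * c + 1, by positivity, exists_pos_forall_lt_iff_eventually.2 ?_⟩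
  filter_upwards [eventually_nhdsGT_zero_mul_left two_pos h, self_mem_nhdsWithin]
    with s ⟨𝒲, h𝒲, hcov⟩ (hs : 0 < s)
  refine ⟨⋃ i, 𝒲 i, by rwa [sUnion_iUnion], ?_, fun z => ?_⟩
  · simp only [mem_iUnion, forall_exists_index]
    exact fun U i hU => (h𝒲 i).2.ediam_lt (by positivity) (by nlinarith) U hU
  · calc {U ∈ ⋃ i, 𝒲 i | ∃ u ∈ U, dist z u < s}.encard
        = (⋃ i, {U ∈ 𝒲 i | ∃ u ∈ U, dist z u < s}).encard := by
          congr 1; ext; simp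
      _ ≤ ∑ i, {U ∈ 𝒲 i | ∃ u ∈ U, dist z u < s}.encard := encard_iUnion_le_of_fintype _
      _ ≤ ∑ _ : Fin (n + 1), 1 := Finset.sum_le_sum fun i _ =>
          encard_le_one_iff_subsingleton.2 ((h𝒲 i).1.subsingleton z)
      _ = n + 1 := by simp

end Capacity

end CapacityDim

theorem capdim_finite_union_general (Z : Type*) [MetricSpace Z] (n k : ℕ)
    (Zi : Fin k → Set Z)
    (hcover : (⋃ i, Zi i) = Set.univ)
    (hdim : ∀ i, CapacityDimLE (Zi i) n) :
    CapacityDimLE Z n := by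
  refine CapacityDim.capacityDimLE_of_coloredDimLE (hcover ▸ .iUnion fun i => ?_)
  simpa using (CapacityDim.coloredDimLE_univ_of_capacityDimLE (hdim i)).image isometry_subtype_coe

/-- Finite union theorem for capacity dimension: if `Z` is a finite union of
closed subsets each of capacity dimension at most `n` (with the induced
metric), then `Z` has capacity dimension at most `n`. -/
theorem capdim_finite_union (Z : Type*) [MetricSpace Z] (n k : ℕ)
    (Zi : Fin k → Set Z) (hclosed : ∀ i, IsClosed (Zi i))
    (hcover : (⋃ i, Zi i) = Set.univ)
    (hdim : ∀ i, CapacityDimLE (Zi i) n) :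
    CapacityDimLE Z n :=
  capdim_finite_union_general Z n k Zi hcover hdim
end
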